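/- arXiv:1608.05409 — 7 statements merged into one kernel-verified Lean document; each statement's English description precedes it below -/
import Mathlib

section
/- Let I = (γ, ∞) with γ ∈ ℝ ∪ {−∞}, and let f : I → ℝ be continuously differentiable with f'(x) > 0 for all x ∈ I, f' strictly monotone increasing on I, and log ∘ f' concave on I. Let x, y ∈ I, let A be the 2×2 complex diagonal matrix diag(x, y), and let B be the 2×2 matrix with all entries equal to 1. Then x ≠ y if and only if there exist a unit vector w ∈ ℂ² and t₀ > 0 such that ⟨f(A)w, w⟩ − ⟨f(A + t₀B)w, w⟩ > 0. -/
/-!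
Log-concavity puts `f'` above the geometric interpolation of its values at `x` and `y`, so the
divided difference `δ = slope f x y` is at least the logarithmic mean of `f' x` and `f' y`, hence
(as `f' x ≠ f' y`) strictly larger than their geometric mean: `f' x * f' y < δ ^ 2`.

For a `2 × 2` Hermitian matrix `M`, `f(M)` is the affine interpolation of `f` at the two eigenvalues
of `M`. The eigenvalues of `A + t • B` move with speed `1` at `t = 0`, so for a real unit vector
`w = (c, s)` the derivative of `⟨f(A + t • B) w, w⟩` at `t = 0` is the Loewner form
`f' x * c ^ 2 + f' y * s ^ 2 + 2 * δ * c * s`, which takes negative values because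
`f' x * f' y < δ ^ 2`. If `x = y`, then `A` is scalar and
`⟨f(A + t • B) w, w⟩ - f x = slope f x (x + 2 * t) * t * |w 0 + w 1| ^ 2 ≥ 0`.
-/

open Matrix Real Set Filter Topology

open Complex (normSq)

theorem Real.two_mul_mul_log_lt_sq_sub_one {u : ℝ} (hu : 1 < u) : 2 * u * log u < u ^ 2 - 1 := by
  let φ : ℝ → ℝ := fun v => v ^ 2 - 1 - 2 * v * log v
  have hφ' : ∀ v, 0 < v → HasDerivAt φ (2 * (v - 1 - log v)) v := by
    intro v hv
    have h : HasDerivAt φ _ v := ((hasDerivAt_pow 2 v).sub_const 1).sub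
      (((hasDerivAt_id' v).const_mul 2).mul (hasDerivAt_log hv.ne'))
    convert h using 1
    field_simp
    ring
  have hφ : StrictMonoOn φ (Ici 1) := by
    refine strictMonoOn_of_hasDerivWithinAt_pos (convex_Ici 1)
      (fun v hv => (hφ' v (by simp at hv; linarith)).continuousAt.continuousWithinAt)
      (fun v hv => (hφ' v (by simp at hv; linarith)).hasDerivWithinAt) ?_
    intro v hv
    rw [interior_Ici, mem_Ioi] at hv
    have := log_lt_sub_one_of_pos (by linarith) hv.ne'
    linarith
  have := hφ self_mem_Ici hu.le hu
  simp only [φ, log_one] at this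
  linarith

theorem Real.sqrt_mul_lt_div_log_sub_log {p q : ℝ} (hp : 0 < p) (hq : 0 < q) (hpq : p ≠ q) :
    √(p * q) < (q - p) / (log q - log p) := by
  wlog h : p < q generalizing p q
  · rw [mul_comm, ← neg_div_neg_eq, neg_sub, neg_sub]
    exact this hq hp hpq.symm (hpq.lt_or_gt.resolve_left h)
  set u := √(q / p)
  have hu : 1 < u := lt_sqrt_of_sq_lt (by rw [one_pow]; exact (one_lt_div hp).2 h)
  have hq_eq : q = p * u ^ 2 := by rw [sq_sqrt (by positivity)]; field_simp
  have hsqrt : √(p * q) = p * u := by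
    rw [hq_eq, ← mul_assoc, ← sq, sqrt_mul (sq_nonneg p), sqrt_sq hp.le, sqrt_sq (by positivity)]
  have hlog : log q - log p = 2 * log u := by
    rw [hq_eq, log_mul hp.ne' (by positivity), log_pow]; push_cast; ring
  rw [hsqrt, lt_div_iff₀ (by rw [hlog]; have := log_pos hu; positivity), hlog, hq_eq]
  nlinarith [two_mul_mul_log_lt_sq_sub_one hu]

theorem ConcaveOn.add_slope_mul_le {g : ℝ → ℝ} {a b s : ℝ} (hg : ConcaveOn ℝ (Icc a b) g)
    (hs : s ∈ Icc a b) : g a + slope g a b * (s - a) ≤ g s := by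
  rcases eq_or_lt_of_le hs.1 with rfl | has
  · simp
  have hab : a < b := has.trans_le hs.2
  have h := hg.slope_anti (left_mem_Icc.2 hab.le) ⟨hs, has.ne'⟩
    ⟨right_mem_Icc.2 hab.le, hab.ne'⟩ hs.2
  rw [slope_def_field g a s, ← le_sub_iff_add_le'] at *
  exact (le_div_iff₀ (sub_pos.2 has)).1 h

theorem div_log_sub_log_le_slope {f f' : ℝ → ℝ} {a b : ℝ} (hab : a < b)
    (hf : ∀ s ∈ Icc a b, HasDerivAt f (f' s) s) (hpos : ∀ s ∈ Icc a b, 0 < f' s)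
    (hconc : ConcaveOn ℝ (Icc a b) (log ∘ f')) (hne : f' a ≠ f' b) :
    (f' b - f' a) / (log (f' b) - log (f' a)) ≤ slope f a b := by
  have ha := left_mem_Icc.2 hab.le
  have hb := right_mem_Icc.2 hab.le
  set m := slope (log ∘ f') a b with hm_def
  have hm_mul : m * (b - a) = log (f' b) - log (f' a) := by
    rw [hm_def, slope_def_field, div_mul_cancel₀ _ (sub_ne_zero.2 hab.ne')]; rfl
  have hm : m ≠ 0 := by
    rintro hm
    rw [hm, zero_mul, eq_comm, sub_eq_zero] at hm_mul
    exact hne (log_injOn_pos (hpos a ha) (hpos b hb) hm_mul.symm)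
  -- `f'` dominates the geometric interpolation `E` of `f' a` and `f' b`, so `f - E / m` increases.
  let E : ℝ → ℝ := fun s => exp (log (f' a) + m * (s - a))
  have hE_le : ∀ s ∈ Icc a b, E s ≤ f' s := fun s hs =>
    (exp_le_exp.2 (hconc.add_slope_mul_le hs)).trans_eq (exp_log (hpos s hs))
  have hE : ∀ s, HasDerivAt (fun s => E s / m) (E s) s := by
    intro s
    have h : HasDerivAt (fun s => E s / m) _ s :=
      ((((hasDerivAt_id' s).sub_const a).const_mul m).const_add (log (f' a))).exp.div_const m
    exact h.congr_deriv (by field_simp; rfl)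
  have hmono : MonotoneOn (fun s => f s - E s / m) (Icc a b) :=
    monotoneOn_of_hasDerivWithinAt_nonneg (convex_Icc a b)
      (fun s hs => ((hf s hs).sub (hE s)).continuousAt.continuousWithinAt)
      (fun s hs => ((hf s (interior_subset hs)).sub (hE s)).hasDerivWithinAt)
      (fun s hs => sub_nonneg.2 (hE_le s (interior_subset hs)))
  have hEa : E a = f' a := by simp [E, exp_log (hpos a ha)]
  have hEb : E b = f' b := by
    simp only [E]; rw [hm_mul, add_sub_cancel, exp_log (hpos b hb)]
  have key := hmono ha hb hab.le
  simp only [hEa, hEb] at key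
  rw [← hm_mul, slope_def_field, ← div_div]
  refine div_le_div_of_nonneg_right ?_ (sub_pos.2 hab).le
  rw [sub_div]
  linarith

theorem sqrt_mul_lt_slope_of_concaveOn_log_deriv {f f' : ℝ → ℝ} {S : Set ℝ}
    (hS : S.OrdConnected) (hf : ∀ s ∈ S, HasDerivAt f (f' s) s) (hpos : ∀ s ∈ S, 0 < f' s)
    (hconc : ConcaveOn ℝ S (log ∘ f')) {a b : ℝ} (ha : a ∈ S) (hb : b ∈ S)
    (hne : f' a ≠ f' b) :
    √(f' a * f' b) < slope f a b := by
  wlog hab : a < b generalizing a b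
  · have hba : b < a := (ne_of_apply_ne f' hne).lt_or_gt.resolve_left hab
    rw [mul_comm, slope_comm]
    exact this hb ha hne.symm hba
  have hsub : Icc a b ⊆ S := hS.out ha hb
  exact (sqrt_mul_lt_div_log_sub_log (hpos a ha) (hpos b hb) hne).trans_le
    (div_log_sub_log_le_slope hab (fun s hs => hf s (hsub hs)) (fun s hs => hpos s (hsub hs))
      (hconc.subset hsub (convex_Icc a b)) hne)

theorem exists_unit_vector_quadratic_form_neg {p q δ : ℝ} (hp : 0 < p) (h : p * q < δ ^ 2) :
    ∃ c s : ℝ, c ^ 2 + s ^ 2 = 1 ∧ p * c ^ 2 + q * s ^ 2 + 2 * δ * (c * s) < 0 := by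
  have hN : 0 < δ ^ 2 + p ^ 2 := by positivity
  refine ⟨δ / √(δ ^ 2 + p ^ 2), -p / √(δ ^ 2 + p ^ 2), ?_, ?_⟩
  · rw [div_pow, div_pow, sq_sqrt hN.le]
    field_simp
  · have : p * (δ / √(δ ^ 2 + p ^ 2)) ^ 2 + q * (-p / √(δ ^ 2 + p ^ 2)) ^ 2
        + 2 * δ * (δ / √(δ ^ 2 + p ^ 2) * (-p / √(δ ^ 2 + p ^ 2)))
        = p * (p * q - δ ^ 2) / (δ ^ 2 + p ^ 2) := by
      rw [div_pow, div_pow, div_mul_div_comm, ← sq, sq_sqrt hN.le]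
      field_simp
      ring
    rw [this]
    exact div_neg_of_neg_of_pos (mul_neg_of_pos_of_neg hp (by linarith)) hN

theorem HasDerivAt.exists_gt_apply_lt {g : ℝ → ℝ} {g' τ : ℝ} (hg : HasDerivAt g g' τ)
    (hg' : g' < 0) : ∃ t > τ, g t < g τ := by
  have hslope : ∀ᶠ t in 𝓝[>] τ, slope g τ t < 0 :=
    (hg.tendsto_slope.mono_left (nhdsWithin_mono τ fun t ht => ne_of_gt ht)).eventually
      (gt_mem_nhds hg')
  obtain ⟨t, ht, hτt⟩ := (hslope.and self_mem_nhdsWithin).exists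
  exact ⟨t, hτt, (slope_neg_iff_of_le hτt.le).1 ht⟩

theorem hasDerivAt_affine_interpolation {f f' l₁ l₂ Q : ℝ → ℝ} {Q' τ : ℝ}
    (hne : l₁ τ ≠ l₂ τ) (hl₁ : HasDerivAt l₁ 1 τ) (hl₂ : HasDerivAt l₂ 1 τ)
    (hQ : HasDerivAt Q Q' τ) (hf₁ : HasDerivAt f (f' (l₁ τ)) (l₁ τ))
    (hf₂ : HasDerivAt f (f' (l₂ τ)) (l₂ τ)) :
    HasDerivAt (fun t => f (l₂ t) + slope f (l₂ t) (l₁ t) * (Q t - l₂ t))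
      (f' (l₂ τ) + (f' (l₁ τ) - f' (l₂ τ)) / (l₁ τ - l₂ τ) * (Q τ - l₂ τ)
        + slope f (l₂ τ) (l₁ τ) * (Q' - 1)) τ := by
  have hslope : HasDerivAt (fun t => slope f (l₂ t) (l₁ t))
      ((f' (l₁ τ) - f' (l₂ τ)) / (l₁ τ - l₂ τ)) τ := by
    simp only [slope_def_field]
    have h : HasDerivAt (fun t => (f (l₁ t) - f (l₂ t)) / (l₁ t - l₂ t)) _ τ :=
      ((hf₁.comp τ hl₁).sub (hf₂.comp τ hl₂)).div (hl₁.sub hl₂) (sub_ne_zero.2 hne)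
    refine h.congr_deriv ?_
    simp only [Pi.sub_apply]
    field_simp
    ring
  exact ((hf₂.comp τ hl₂).add (hslope.mul (hQ.sub hl₂))).congr_deriv
    (by simp only [Pi.sub_apply]; ring)

theorem cfc_eq_smul_add_algebraMap_of_eqOn {A : Type*} [Ring A] [StarRing A] [Algebra ℝ A]
    [TopologicalSpace A] [ContinuousFunctionalCalculus ℝ A IsSelfAdjoint] {a : A}
    (ha : IsSelfAdjoint a) {f : ℝ → ℝ} {k c : ℝ}
    (h : (spectrum ℝ a).EqOn f (fun ρ => k * ρ + c)) :
    cfc f a = k • a + algebraMap ℝ A c := by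
  rw [cfc_congr h, cfc_add_const c (fun ρ => k * ρ) a, cfc_const_mul_id k a]

section RCLike

variable {𝕜 : Type*} [RCLike 𝕜]

theorem Matrix.IsHermitian.dotProduct_cfc_mulVec_of_eqOn {n : Type*} [Fintype n] [DecidableEq n]
    {M : Matrix n n 𝕜} (hM : M.IsHermitian) {f : ℝ → ℝ} {k c : ℝ}
    (h : (spectrum ℝ M).EqOn f (fun ρ => k * ρ + c)) {w : n → 𝕜} (hw : star w ⬝ᵥ w = 1) :
    star w ⬝ᵥ cfc f M *ᵥ w = k * (star w ⬝ᵥ M *ᵥ w) + c := by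
  rw [cfc_eq_smul_add_algebraMap_of_eqOn hM h, Algebra.algebraMap_eq_smul_one, add_mulVec,
    smul_mulVec, smul_mulVec, one_mulVec, dotProduct_add, dotProduct_smul, dotProduct_smul, hw,
    RCLike.real_smul_eq_coe_mul, RCLike.real_smul_eq_coe_mul, mul_one]

theorem Matrix.eq_or_eq_of_mem_spectrum_fin_two {M : Matrix (Fin 2) (Fin 2) 𝕜} {l₁ l₂ ρ : ℝ}
    (htr : M.trace = l₁ + l₂) (hdet : M.det = l₁ * l₂) (hρ : ρ ∈ spectrum ℝ M) :
    ρ = l₁ ∨ ρ = l₂ := by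
  rw [spectrum.mem_iff, isUnit_iff_isUnit_det, isUnit_iff_ne_zero, not_not] at hρ
  have hchar : (algebraMap ℝ (Matrix (Fin 2) (Fin 2) 𝕜) ρ - M).det =
      ((ρ - l₁) * (ρ - l₂) : ℝ) := by
    rw [trace_fin_two] at htr
    rw [det_fin_two] at hdet
    simp only [det_fin_two, sub_apply, algebraMap_matrix_apply, RCLike.algebraMap_eq_ofReal,
      Fin.isValue, ↓reduceIte, zero_ne_one, one_ne_zero, map_mul, map_sub, zero_sub]
    linear_combination (-(ρ : 𝕜)) * htr + hdet
  rw [hchar, RCLike.ofReal_eq_zero, mul_eq_zero, sub_eq_zero, sub_eq_zero] at hρ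
  exact hρ

theorem Matrix.IsHermitian.dotProduct_cfc_mulVec_fin_two {M : Matrix (Fin 2) (Fin 2) 𝕜}
    (hM : M.IsHermitian) {l₁ l₂ : ℝ} (htr : M.trace = l₁ + l₂) (hdet : M.det = l₁ * l₂)
    (f : ℝ → ℝ) {w : Fin 2 → 𝕜} (hw : star w ⬝ᵥ w = 1) :
    star w ⬝ᵥ cfc f M *ᵥ w = f l₂ + slope f l₂ l₁ * (star w ⬝ᵥ M *ᵥ w - l₂) := by
  have h : (spectrum ℝ M).EqOn f
      (fun ρ => slope f l₂ l₁ * ρ + (f l₂ - slope f l₂ l₁ * l₂)) := by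
    intro ρ hρ
    rcases eq_or_eq_of_mem_spectrum_fin_two htr hdet hρ with rfl | rfl
    · have := sub_smul_slope f l₂ ρ
      simp only [smul_eq_mul, vsub_eq_sub] at this
      linear_combination -this
    · ring
  rw [hM.dotProduct_cfc_mulVec_of_eqOn h hw]
  push_cast
  ring

end RCLike

theorem diagonal_add_smul_ones_eq (x y t : ℝ) :
    diagonal ![(x : ℂ), y] + t • !![1, 1; 1, 1] = !![(x + t : ℂ), t; t, y + t] := by
  ext i j
  fin_cases i <;> fin_cases j <;> simp

theorem re_dotProduct_cfc_diagonal_add_smul_ones {x y t l₁ l₂ : ℝ}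
    (hsum : l₁ + l₂ = x + y + 2 * t) (hprod : l₁ * l₂ = x * y + t * (x + y)) (f : ℝ → ℝ)
    {w : Fin 2 → ℂ} (hw : star w ⬝ᵥ w = 1) :
    (star w ⬝ᵥ cfc f (diagonal ![(x : ℂ), y] + t • !![1, 1; 1, 1]) *ᵥ w).re =
      f l₂ + slope f l₂ l₁ *
        (x * normSq (w 0) + y * normSq (w 1) + t * normSq (w 0 + w 1) - l₂) := by
  rw [diagonal_add_smul_ones_eq]
  have hM : (!![(x + t : ℂ), t; t, y + t]).IsHermitian := by
    ext i j
    fin_cases i <;> fin_cases j <;> simp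
  have htr : (!![(x + t : ℂ), t; t, y + t]).trace = (l₁ : ℂ) + l₂ := by
    rw [trace_fin_two_of]
    exact_mod_cast (by linarith : x + t + (y + t) = l₁ + l₂)
  have hdet : (!![(x + t : ℂ), t; t, y + t]).det = (l₁ : ℂ) * l₂ := by
    rw [det_fin_two_of]
    exact_mod_cast (by linear_combination -hprod : (x + t) * (y + t) - t * t = l₁ * l₂)
  have hform : star w ⬝ᵥ !![(x + t : ℂ), t; t, y + t] *ᵥ w =
      ((x * normSq (w 0) + y * normSq (w 1) + t * normSq (w 0 + w 1) : ℝ) : ℂ) := by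
    simp [dotProduct, mulVec, Fin.sum_univ_two, Complex.normSq_eq_conj_mul_self]
    ring
  rw [hM.dotProduct_cfc_mulVec_fin_two htr hdet f hw, hform]
  simp

theorem exists_eigenvalue_curves {x y : ℝ} (hxy : x ≠ y) :
    ∃ l₁ l₂ : ℝ → ℝ, l₁ 0 = x ∧ l₂ 0 = y ∧ HasDerivAt l₁ 1 0 ∧ HasDerivAt l₂ 1 0 ∧
      ∀ t, l₁ t + l₂ t = x + y + 2 * t ∧ l₁ t * l₂ t = x * y + t * (x + y) := by
  have hxy' : x - y ≠ 0 := sub_ne_zero.2 hxy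
  -- `d t` is the square root of the discriminant `(x - y) ^ 2 + 4 t ^ 2` with the sign of `x - y`.
  let d : ℝ → ℝ := fun t => (x - y) * √(1 + (2 * t / (x - y)) ^ 2)
  have hd_sq : ∀ t, d t ^ 2 = (x - y) ^ 2 + 4 * t ^ 2 := by
    intro t
    simp only [d]
    rw [mul_pow, sq_sqrt (by positivity)]
    field_simp
    ring
  have hd : HasDerivAt d 0 0 := by
    have h : HasDerivAt d _ 0 :=
      (((((hasDerivAt_id' (0 : ℝ)).const_mul 2).div_const (x - y)).pow 2).const_add 1).sqrt
        (by simp) |>.const_mul (x - y)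
    simpa using h
  refine ⟨fun t => (x + y + 2 * t + d t) / 2, fun t => (x + y + 2 * t - d t) / 2, ?_, ?_, ?_, ?_,
    fun t => ⟨by ring, by linear_combination (-1 / 4 : ℝ) * hd_sq t⟩⟩
  · simp [d]
  · simp [d]
  · simpa using ((((hasDerivAt_id' (0 : ℝ)).const_mul 2).const_add (x + y)).add hd).div_const 2
  · simpa using ((((hasDerivAt_id' (0 : ℝ)).const_mul 2).const_add (x + y)).sub hd).div_const 2

theorem exists_re_dotProduct_cfc_diagonal_add_smul_ones_lt {x y : ℝ} (hxy : x ≠ y)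
    {f f' : ℝ → ℝ} (hfx : HasDerivAt f (f' x) x) (hfy : HasDerivAt f (f' y) y) (hx : 0 < f' x)
    (hloewner : f' x * f' y < slope f x y ^ 2) :
    ∃ w : Fin 2 → ℂ, star w ⬝ᵥ w = 1 ∧ ∃ t₀ : ℝ, 0 < t₀ ∧
      (star w ⬝ᵥ cfc f (diagonal ![(x : ℂ), y] + t₀ • !![1, 1; 1, 1]) *ᵥ w).re <
        (star w ⬝ᵥ cfc f (diagonal ![(x : ℂ), y]) *ᵥ w).re := by
  obtain ⟨c, s, hcs, hneg⟩ := exists_unit_vector_quadratic_form_neg hx hloewner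
  obtain ⟨l₁, l₂, hl₁0, hl₂0, hl₁, hl₂, hl⟩ := exists_eigenvalue_curves hxy
  set w : Fin 2 → ℂ := ![(c : ℂ), s]
  have hw : star w ⬝ᵥ w = 1 := by
    simp [w, dotProduct, Fin.sum_univ_two]
    exact_mod_cast (by linear_combination hcs : c * c + s * s = 1)
  let g : ℝ → ℝ := fun t =>
    f (l₂ t) + slope f (l₂ t) (l₁ t) * (x * c ^ 2 + y * s ^ 2 + t * (c + s) ^ 2 - l₂ t)
  have hg : ∀ t,
      (star w ⬝ᵥ cfc f (diagonal ![(x : ℂ), y] + t • !![1, 1; 1, 1]) *ᵥ w).re = g t := by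
    intro t
    rw [re_dotProduct_cfc_diagonal_add_smul_ones (hl t).1 (hl t).2 f hw]
    simp only [w, g, Matrix.cons_val_zero, Matrix.cons_val_one, ← Complex.ofReal_add,
      Complex.normSq_ofReal]
    ring
  have hg' : HasDerivAt g (f' x * c ^ 2 + f' y * s ^ 2 + 2 * slope f x y * (c * s)) 0 := by
    have hQ : HasDerivAt (fun t => x * c ^ 2 + y * s ^ 2 + t * (c + s) ^ 2) ((c + s) ^ 2) 0 := by
      simpa using ((hasDerivAt_id' (0 : ℝ)).mul_const ((c + s) ^ 2)).const_add
        (x * c ^ 2 + y * s ^ 2)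
    have h := hasDerivAt_affine_interpolation (f' := f') (by rwa [hl₁0, hl₂0]) hl₁ hl₂ hQ
      (by rwa [hl₁0]) (by rwa [hl₂0])
    rw [hl₁0, hl₂0] at h
    refine h.congr_deriv ?_
    have hD : (f' x - f' y) / (x - y) * (x - y) = f' x - f' y :=
      div_mul_cancel₀ _ (sub_ne_zero.2 hxy)
    rw [slope_comm f y x]
    linear_combination c ^ 2 * hD + ((f' x - f' y) / (x - y) * y - f' y + slope f x y) * hcs
  obtain ⟨t₀, ht₀, hlt⟩ := hg'.exists_gt_apply_lt hneg
  refine ⟨w, hw, t₀, ht₀, ?_⟩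
  have h0 := hg 0
  rw [zero_smul, add_zero] at h0
  rw [hg, h0]
  exact hlt

theorem re_dotProduct_cfc_diagonal_le_add_smul_ones {x t : ℝ} (ht : 0 ≤ t) {f : ℝ → ℝ}
    (hf : f x ≤ f (x + 2 * t)) {w : Fin 2 → ℂ} (hw : star w ⬝ᵥ w = 1) :
    (star w ⬝ᵥ cfc f (diagonal ![(x : ℂ), x]) *ᵥ w).re ≤
      (star w ⬝ᵥ cfc f (diagonal ![(x : ℂ), x] + t • !![1, 1; 1, 1]) *ᵥ w).re := by
  have h0 := re_dotProduct_cfc_diagonal_add_smul_ones (x := x) (y := x) (t := 0) (l₁ := x)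
    (by ring) (by ring) f hw
  rw [zero_smul, add_zero] at h0
  rw [h0, re_dotProduct_cfc_diagonal_add_smul_ones (l₁ := x + 2 * t) (l₂ := x) (by ring)
    (by ring) f hw, slope_same, zero_mul, add_zero]
  have hnorm : normSq (w 0) + normSq (w 1) = 1 := by
    simpa [dotProduct, Fin.sum_univ_two, Complex.normSq_apply] using congrArg Complex.re hw
  have hslope : 0 ≤ slope f x (x + 2 * t) := (slope_nonneg_iff_of_le (by linarith)).2 hf
  rw [show x * normSq (w 0) + x * normSq (w 1) + t * normSq (w 0 + w 1) - x
    = t * normSq (w 0 + w 1) by linear_combination x * hnorm]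
  exact le_add_of_nonneg_right (mul_nonneg hslope (mul_nonneg ht (Complex.normSq_nonneg _)))

theorem ne_iff_exists_unit_vector_cfc_decreases_general
    (γ : EReal) (I : Set ℝ) (hI : I = {x : ℝ | γ < (x : EReal)})
    (f f' : ℝ → ℝ)
    (hderiv : ∀ x ∈ I, HasDerivAt f (f' x) x)
    (hpos : ∀ x ∈ I, 0 < f' x)
    (hmono : StrictMonoOn f' I)
    (hconc : ∀ x ∈ I, ∀ y ∈ I, ∀ t ∈ Set.Icc (0:ℝ) 1,
      t * Real.log (f' x) + (1 - t) * Real.log (f' y)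
        ≤ Real.log (f' (t * x + (1 - t) * y)))
    (x y : ℝ) (hx : x ∈ I) (hy : y ∈ I)
    (A B : Matrix (Fin 2) (Fin 2) ℂ)
    (hA : A = Matrix.diagonal ![(x : ℂ), (y : ℂ)])
    (hB : B = !![1, 1; 1, 1])
    (hAH : A.IsHermitian)
    (hABH : ∀ t : ℝ, 0 < t → (A + t • B).IsHermitian) :
    x ≠ y ↔
      ∃ (w : Fin 2 → ℂ) (t₀ : ℝ) (ht₀ : 0 < t₀),
        star w ⬝ᵥ w = 1 ∧
        0 < ((star w ⬝ᵥ (hAH.cfc f).mulVec w)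
              - (star w ⬝ᵥ ((hABH t₀ ht₀).cfc f).mulVec w)).re := by
  have hup : ∀ u ∈ I, ∀ v, u ≤ v → v ∈ I := by
    intro u hu v huv
    rw [hI] at hu ⊢
    exact lt_of_lt_of_le hu (EReal.coe_le_coe_iff.2 huv)
  have hconn : I.OrdConnected := ⟨fun u hu _ _ z hz => hup u hu z hz.1⟩
  simp only [← IsHermitian.cfc_eq]
  subst hA hB
  constructor
  · intro hxy
    have hlogconc : ConcaveOn ℝ I (log ∘ f') := ⟨hconn.convex, fun u hu v hv a b ha hb hab => by
      obtain rfl := eq_sub_of_add_eq' hab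
      simpa using hconc u hu v hv a ⟨ha, by linarith⟩⟩
    have hδ := sqrt_mul_lt_slope_of_concaveOn_log_deriv hconn hderiv hpos hlogconc hx hy
      (hmono.injOn.ne hx hy hxy)
    obtain ⟨w, hw, t₀, ht₀, hlt⟩ := exists_re_dotProduct_cfc_diagonal_add_smul_ones_lt hxy
      (hderiv x hx) (hderiv y hy) (hpos x hx) ((sqrt_lt' ((sqrt_nonneg _).trans_lt hδ)).1 hδ)
    exact ⟨w, t₀, ht₀, hw, by rwa [Complex.sub_re, sub_pos]⟩
  · rintro ⟨w, t₀, ht₀, hw, hlt⟩ rfl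
    have hfmono : MonotoneOn f I := monotoneOn_of_hasDerivWithinAt_nonneg hconn.convex
      (fun z hz => (hderiv z hz).continuousAt.continuousWithinAt)
      (fun z hz => (hderiv z (interior_subset hz)).hasDerivWithinAt)
      (fun z hz => (hpos z (interior_subset hz)).le)
    have hle := re_dotProduct_cfc_diagonal_le_add_smul_ones ht₀.le
      (hfmono hx (hup x hx _ (by linarith)) (by linarith)) hw
    rw [Complex.sub_re, sub_pos] at hlt
    exact hle.not_gt hlt

/-- **Key Proposition.** Let `f` be continuously differentiable on `I = (γ, ∞)` with positive,
strictly increasing, log-concave derivative, let `A = diag(x, y)` with `x, y ∈ I`, and let `B`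
be the 2×2 all-ones matrix. Then `x ≠ y` if and only if there exist a unit vector `w ∈ ℂ²` and
`t₀ > 0` with `⟨f(A)w, w⟩ − ⟨f(A + t₀B)w, w⟩ > 0`. -/
theorem ne_iff_exists_unit_vector_cfc_decreases
    (γ : EReal) (hγ : γ ≠ ⊤) (I : Set ℝ) (hI : I = {x : ℝ | γ < (x : EReal)})
    (f f' : ℝ → ℝ)
    (hderiv : ∀ x ∈ I, HasDerivAt f (f' x) x)
    (hcont : ContinuousOn f' I)
    (hpos : ∀ x ∈ I, 0 < f' x)
    (hmono : StrictMonoOn f' I)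
    (hconc : ∀ x ∈ I, ∀ y ∈ I, ∀ t ∈ Set.Icc (0:ℝ) 1,
      t * Real.log (f' x) + (1 - t) * Real.log (f' y)
        ≤ Real.log (f' (t * x + (1 - t) * y)))
    (x y : ℝ) (hx : x ∈ I) (hy : y ∈ I)
    (A B : Matrix (Fin 2) (Fin 2) ℂ)
    (hA : A = Matrix.diagonal ![(x : ℂ), (y : ℂ)])
    (hB : B = !![1, 1; 1, 1])
    (hAH : A.IsHermitian)
    (hABH : ∀ t : ℝ, 0 < t → (A + t • B).IsHermitian) :
    x ≠ y ↔
      ∃ (w : Fin 2 → ℂ) (t₀ : ℝ) (ht₀ : 0 < t₀),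
        star w ⬝ᵥ w = 1 ∧
        0 < ((star w ⬝ᵥ (hAH.cfc f).mulVec w)
              - (star w ⬝ᵥ ((hABH t₀ ht₀).cfc f).mulVec w)).re :=
  ne_iff_exists_unit_vector_cfc_decreases_general γ I hI f f' hderiv hpos hmono hconc x y hx hy A B
    hA hB hAH hABH
end

section
/- Let I = (γ, ∞) with γ ∈ ℝ ∪ {−∞}, and let f : I → ℝ be continuously differentiable with f'(x) > 0 for all x ∈ I, f' strictly monotone increasing on I, and log ∘ f' concave on I. Let x, y ∈ I with x ≠ y, let A = diag(x, y), and let B be the 2×2 matrix with all entries equal to 1. Then there exist a unit vector w ∈ ℂ² and t₀ > 0 such that ⟨f(A + t₀B)w, w⟩ < ⟨f(A)w, w⟩. -/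
/-!
For a Hermitian `2 × 2` matrix with eigenvalues `l₁, l₂`, `f` agrees on the spectrum with its
secant line through `l₁, l₂`, so `f(M) = f(l₁) + [l₁, l₂]f · (M - l₁)`. Along `A + tB` both
eigenvalues move with unit speed at `t = 0`, and for a real unit vector `w` this gives
`d/dt ⟨f(A + tB)w, w⟩ |_{t=0} = f'(x) w₁² + f'(y) w₂² + 2 [x, y]f w₁ w₂`.
This quadratic form takes negative values once `[x, y]f > √(f'(x) f'(y))`. That inequality holds
because log-concavity puts `f'` above the geometric interpolation of `f'(x)` and `f'(y)`, whose
mean over `[x, y]` is their logarithmic mean, and the logarithmic mean strictly exceeds the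
geometric one (`sinh u > u`).
-/

open Matrix Set Real

lemma exp_add_div_two_lt_slope_exp {u v : ℝ} (huv : u ≠ v) :
    exp ((u + v) / 2) < slope exp u v := by
  wlog h : u < v generalizing u v
  · rw [slope_comm, add_comm]
    exact this huv.symm (huv.lt_or_gt.resolve_left h)
  have hsinh : (v - u) / 2 < sinh ((v - u) / 2) := self_lt_sinh_iff.2 (by linarith)
  have hv : exp v = exp ((u + v) / 2) * exp ((v - u) / 2) := by rw [← exp_add]; ring_nf
  have hu : exp u = exp ((u + v) / 2) * exp (-((v - u) / 2)) := by rw [← exp_add]; ring_nf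
  rw [slope_def_field, lt_div_iff₀ (sub_pos.2 h), hv, hu]
  rw [sinh_eq] at hsinh
  nlinarith [exp_pos ((u + v) / 2)]

lemma sub_le_sub_of_hasDerivAt_le {f g f' g' : ℝ → ℝ} {a b : ℝ} (hab : a ≤ b)
    (hf : ∀ z ∈ Icc a b, HasDerivAt f (f' z) z) (hg : ∀ z ∈ Icc a b, HasDerivAt g (g' z) z)
    (hle : ∀ z ∈ Icc a b, g' z ≤ f' z) : g b - g a ≤ f b - f a := by
  have hmono : MonotoneOn (f - g) (Icc a b) := by
    refine monotoneOn_of_hasDerivWithinAt_nonneg (convex_Icc a b)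
      (fun z hz => ((hf z hz).sub (hg z hz)).continuousAt.continuousWithinAt)
      (fun z hz => ((hf z (interior_subset hz)).sub (hg z (interior_subset hz))).hasDerivWithinAt)
      (fun z hz => sub_nonneg.2 (hle z (interior_subset hz)))
  have := hmono (left_mem_Icc.2 hab) (right_mem_Icc.2 hab) hab
  simp only [Pi.sub_apply] at this
  linarith

lemma ConcaveOn.add_slope_mul_sub_le {φ : ℝ → ℝ} {a b z : ℝ} (hφ : ConcaveOn ℝ (Icc a b) φ)
    (hab : a < b) (hz : z ∈ Icc a b) : φ a + slope φ a b * (z - a) ≤ φ z := by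
  have hba : b - a ≠ 0 := sub_ne_zero.2 hab.ne'
  have hw : 0 ≤ (z - a) / (b - a) := div_nonneg (by linarith [hz.1]) (by linarith)
  have hw' : 0 ≤ 1 - (z - a) / (b - a) := by
    rw [sub_nonneg, div_le_one (by linarith)]; linarith [hz.2]
  have h := hφ.2 (right_mem_Icc.2 hab.le) (left_mem_Icc.2 hab.le) hw hw' (by ring)
  have hz' : (z - a) / (b - a) * b + (1 - (z - a) / (b - a)) * a = z := by field_simp; ring
  simp only [smul_eq_mul, hz'] at h
  rw [slope_def_field]
  refine le_of_eq_of_le ?_ h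
  field_simp
  ring

lemma sqrt_mul_lt_slope_of_concaveOn_Icc {f f' : ℝ → ℝ} {a b : ℝ} (hab : a < b)
    (hf : ∀ z ∈ Icc a b, HasDerivAt f (f' z) z) (hpos : ∀ z ∈ Icc a b, 0 < f' z)
    (hne : f' a ≠ f' b) (hconc : ConcaveOn ℝ (Icc a b) (log ∘ f')) :
    √(f' a * f' b) < slope f a b := by
  have ha := hpos a (left_mem_Icc.2 hab.le)
  have hb := hpos b (right_mem_Icc.2 hab.le)
  set u := log (f' a)
  set v := log (f' b)
  have hu : exp u = f' a := exp_log ha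
  have hv : exp v = f' b := exp_log hb
  have huv : u ≠ v := fun h => hne (log_injOn_pos ha hb h)
  set c := slope (log ∘ f') a b with hc_def
  have hcba : c * (b - a) = v - u := by
    rw [hc_def, slope_def_field]; exact div_mul_cancel₀ _ (sub_ne_zero.2 hab.ne')
  have hc : c ≠ 0 := left_ne_zero_of_mul (hcba ▸ sub_ne_zero.2 huv.symm)
  -- `exp (u + c * (z - a))` is the geometric interpolation of `f' a` and `f' b`
  have hinterp : ∀ z ∈ Icc a b, exp (u + c * (z - a)) ≤ f' z := fun z hz =>
    (exp_le_exp.2 (hconc.add_slope_mul_sub_le hab hz)).trans_eq (exp_log (hpos z hz))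
  have hderiv (z : ℝ) :
      HasDerivAt (fun z => exp (u + c * (z - a)) / c) (exp (u + c * (z - a))) z := by
    refine ((((hasDerivAt_id z).sub_const a).const_mul c).const_add u).exp.div_const c
      |>.congr_deriv ?_
    rw [mul_one, mul_div_cancel_right₀ _ hc, id]
  have hmain := sub_le_sub_of_hasDerivAt_le hab.le hf (fun z _ => hderiv z) hinterp
  rw [hcba, add_sub_cancel, sub_self, mul_zero, add_zero, hu, hv] at hmain
  calc √(f' a * f' b) = exp ((u + v) / 2) := by rw [exp_half, exp_add, hu, hv]
    _ < slope exp u v := exp_add_div_two_lt_slope_exp huv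
    _ = (f' b / c - f' a / c) / (b - a) := by
        rw [slope_def_field, hu, hv, ← div_sub_div_same, ← hcba]
        field_simp
    _ ≤ slope f a b := by
        rw [slope_def_field]; exact div_le_div_of_nonneg_right hmain (by linarith)

lemma sqrt_mul_lt_slope_of_concaveOn {f f' : ℝ → ℝ} {s : Set ℝ} (hs : s.OrdConnected)
    (hf : ∀ z ∈ s, HasDerivAt f (f' z) z) (hpos : ∀ z ∈ s, 0 < f' z) (hinj : s.InjOn f')
    (hconc : ConcaveOn ℝ s (log ∘ f')) {x y : ℝ} (hx : x ∈ s) (hy : y ∈ s) (hxy : x ≠ y) :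
    √(f' x * f' y) < slope f x y := by
  wlog h : x < y generalizing x y
  · rw [mul_comm, slope_comm]
    exact this hy hx hxy.symm (hxy.lt_or_gt.resolve_left h)
  have hsub : Icc x y ⊆ s := hs.out hx hy
  exact sqrt_mul_lt_slope_of_concaveOn_Icc h (fun z hz => hf z (hsub hz))
    (fun z hz => hpos z (hsub hz)) (hinj.ne hx hy hxy) (hconc.subset hsub (convex_Icc x y))

lemma exists_sq_add_sq_eq_one_and_neg {a b c : ℝ} (ha : 0 < a) (hb : 0 < b) (hc : √(a * b) < c) :
    ∃ w₁ w₂ : ℝ, w₁ ^ 2 + w₂ ^ 2 = 1 ∧ a * w₁ ^ 2 + b * w₂ ^ 2 + 2 * c * (w₁ * w₂) < 0 := by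
  have hn2 : √(a + b) ^ 2 = a + b := sq_sqrt (by positivity)
  have ha2 : √a ^ 2 = a := sq_sqrt ha.le
  have hb2 : √b ^ 2 = b := sq_sqrt hb.le
  -- balancing `a w₁² = b w₂²` turns the form into `2 √(ab) (√(ab) - c) / (a + b)`
  refine ⟨√b / √(a + b), -√a / √(a + b), ?_, ?_⟩
  · rw [div_pow, neg_div, neg_sq, div_pow, hb2, ha2, hn2]
    field_simp
    ring
  · rw [sqrt_mul ha.le] at hc
    have hab : 0 < √a * √b := by positivity
    have key : a * (√b / √(a + b)) ^ 2 + b * (-√a / √(a + b)) ^ 2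
        + 2 * c * (√b / √(a + b) * (-√a / √(a + b))) = 2 * (a * b - c * (√a * √b)) / (a + b) := by
      field_simp
      simp only [hn2, ha2, hb2]
      ring
    rw [key]
    have hab2 : a * b = (√a * √b) ^ 2 := by rw [mul_pow, ha2, hb2]
    exact div_neg_of_neg_of_pos (by nlinarith) (by positivity)

lemma spectrum_subset_of_trace_of_det {𝕜 : Type*} [RCLike 𝕜] {M : Matrix (Fin 2) (Fin 2) 𝕜}
    {l₁ l₂ : ℝ} (htr : M.trace = (l₁ + l₂ : ℝ)) (hdet : M.det = (l₁ * l₂ : ℝ)) :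
    spectrum ℝ M ⊆ {l₁, l₂} := by
  intro z hz
  rw [← spectrum.algebraMap_mem_iff 𝕜, mem_spectrum_iff_isRoot_charpoly, charpoly_fin_two,
    htr, hdet] at hz
  simp only [Polynomial.IsRoot, Polynomial.eval_add, Polynomial.eval_sub, Polynomial.eval_pow,
    Polynomial.eval_mul, Polynomial.eval_X, Polynomial.eval_C] at hz
  push_cast at hz
  have : ((z - l₁) * (z - l₂) : ℝ) = (0 : 𝕜) := by push_cast; linear_combination hz
  rw [RCLike.ofReal_eq_zero, mul_eq_zero, sub_eq_zero, sub_eq_zero] at this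
  exact this

lemma cfc_eq_of_spectrum_subset_pair {A : Type*} [Ring A] [StarRing A] [TopologicalSpace A]
    [Algebra ℝ A] [ContinuousFunctionalCalculus ℝ A IsSelfAdjoint] {a : A} (ha : IsSelfAdjoint a)
    {l₁ l₂ : ℝ} (hspec : spectrum ℝ a ⊆ {l₁, l₂}) (f : ℝ → ℝ) :
    cfc f a = algebraMap ℝ A (f l₁ - slope f l₁ l₂ * l₁) + slope f l₁ l₂ • a := by
  have hf : EqOn f (fun z => (f l₁ - slope f l₁ l₂ * l₁) + slope f l₁ l₂ * z) (spectrum ℝ a) := by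
    intro z hz
    rcases hspec hz with rfl | rfl
    · ring
    · have := sub_smul_slope f l₁ z
      simp only [smul_eq_mul, vsub_eq_sub] at this
      linear_combination -this
  rw [cfc_congr hf, cfc_const_add _ _ _ (by fun_prop) ha, cfc_const_mul_id _ _ ha]

lemma re_dotProduct_cfc_mulVec_of_spectrum_subset_pair {n 𝕜 : Type*} [Fintype n] [DecidableEq n]
    [RCLike 𝕜] {M : Matrix n n 𝕜} (hM : M.IsHermitian) {l₁ l₂ : ℝ}
    (hspec : spectrum ℝ M ⊆ {l₁, l₂}) (f : ℝ → ℝ) {w : n → 𝕜} (hw : star w ⬝ᵥ w = 1) :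
    RCLike.re (star w ⬝ᵥ cfc f M *ᵥ w) =
      f l₁ + slope f l₁ l₂ * (RCLike.re (star w ⬝ᵥ M *ᵥ w) - l₁) := by
  rw [cfc_eq_of_spectrum_subset_pair hM.isSelfAdjoint hspec, Algebra.algebraMap_eq_smul_one,
    add_mulVec, smul_mulVec, smul_mulVec, one_mulVec, dotProduct_add, dotProduct_smul,
    dotProduct_smul, hw]
  simp only [map_add, RCLike.smul_re, RCLike.one_re, mul_one]
  ring

/-- `√(δ² + t²)` with the sign of `δ`, so that `(x + y) / 2 + t ± signedHypot ((x - y) / 2) t`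
label the eigenvalues of `diag(x, y) + t • !![1, 1; 1, 1]` smoothly in `t`, with values `x` and `y`
at `t = 0` whatever the order of `x` and `y`. -/
noncomputable def signedHypot (δ t : ℝ) : ℝ := δ * √(1 + (t / δ) ^ 2)

@[simp]
lemma signedHypot_zero_right (δ : ℝ) : signedHypot δ 0 = δ := by simp [signedHypot]

lemma sq_signedHypot {δ : ℝ} (hδ : δ ≠ 0) (t : ℝ) : signedHypot δ t ^ 2 = δ ^ 2 + t ^ 2 := by
  rw [signedHypot, mul_pow, sq_sqrt (by positivity)]
  field_simp

lemma hasDerivAt_signedHypot (δ : ℝ) : HasDerivAt (signedHypot δ) 0 0 := by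
  have h := (((hasDerivAt_id (0 : ℝ)).div_const δ).pow 2).const_add 1
  exact ((h.sqrt (by simp)).const_mul δ).congr_deriv (by simp)

section
variable {x y t : ℝ}

lemma trace_diagonal_add_smul_ones :
    (diagonal ![(x : ℂ), y] + t • !![1, 1; 1, 1]).trace = ((x + y + 2 * t : ℝ) : ℂ) := by
  simp only [smul_of, smul_cons, Complex.real_smul, mul_one, Matrix.smul_empty, trace_add,
    trace_diagonal, Fin.sum_univ_two, cons_val_zero, cons_val_one, trace_fin_two, of_apply,
    cons_val', cons_val_fin_one, Complex.ofReal_add, Complex.ofReal_mul, Complex.ofReal_ofNat]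
  ring

lemma det_diagonal_add_smul_ones :
    (diagonal ![(x : ℂ), y] + t • !![1, 1; 1, 1]).det = (((x + t) * (y + t) - t ^ 2 : ℝ) : ℂ) := by
  simp only [smul_of, smul_cons, Complex.real_smul, mul_one, Matrix.smul_empty, det_fin_two,
    Matrix.add_apply, diagonal_apply_eq, cons_val_zero, of_apply, cons_val', cons_val_fin_one,
    cons_val_one, ne_eq, zero_ne_one, not_false_eq_true, diagonal_apply_ne, zero_add, one_ne_zero,
    Complex.ofReal_sub, Complex.ofReal_mul, Complex.ofReal_add, Complex.ofReal_pow]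
  ring

lemma isHermitian_diagonal_add_smul_ones :
    (diagonal ![(x : ℂ), y] + t • !![1, 1; 1, 1]).IsHermitian := by
  ext i j; fin_cases i <;> fin_cases j <;> simp

lemma spectrum_diagonal_add_smul_ones_subset (hxy : x ≠ y) :
    spectrum ℝ (diagonal ![(x : ℂ), y] + t • !![1, 1; 1, 1]) ⊆
      {(x + y) / 2 + t + signedHypot ((x - y) / 2) t,
        (x + y) / 2 + t - signedHypot ((x - y) / 2) t} := by
  have hδ : (x - y) / 2 ≠ 0 := div_ne_zero (sub_ne_zero.2 hxy) two_ne_zero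
  -- each `rfl` below identifies the coercions `Complex.ofReal` and `RCLike.ofReal`
  refine spectrum_subset_of_trace_of_det ?_ ?_
  · rw [trace_diagonal_add_smul_ones, show x + y + 2 * t =
      ((x + y) / 2 + t + signedHypot ((x - y) / 2) t) +
        ((x + y) / 2 + t - signedHypot ((x - y) / 2) t) by ring]
    rfl
  · rw [det_diagonal_add_smul_ones, show (x + t) * (y + t) - t ^ 2 =
      ((x + y) / 2 + t + signedHypot ((x - y) / 2) t) *
        ((x + y) / 2 + t - signedHypot ((x - y) / 2) t) by
      linear_combination sq_signedHypot hδ t]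
    rfl

lemma re_dotProduct_diagonal_add_smul_ones_mulVec (w₁ w₂ : ℝ) :
    (star ![(w₁ : ℂ), w₂] ⬝ᵥ (diagonal ![(x : ℂ), y] + t • !![1, 1; 1, 1]) *ᵥ ![(w₁ : ℂ), w₂]).re
      = x * w₁ ^ 2 + y * w₂ ^ 2 + t * (w₁ + w₂) ^ 2 := by
  simp only [dotProduct, Pi.star_apply, RCLike.star_def, mulVec, smul_of, smul_cons,
    Complex.real_smul, mul_one, Matrix.smul_empty, Matrix.add_apply, of_apply, cons_val',
    cons_val_fin_one, Fin.sum_univ_two, cons_val_zero, cons_val_one, Complex.conj_ofReal,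
    diagonal_apply_eq, ne_eq, zero_ne_one, not_false_eq_true, diagonal_apply_ne, zero_add,
    one_ne_zero, Complex.add_re, Complex.mul_re, Complex.ofReal_re, Complex.add_im,
    Complex.ofReal_im, add_zero, mul_zero, sub_zero, Complex.mul_im, zero_mul]
  ring

end

lemma hasDerivAt_secant_interpolation {f f' l₁ l₂ : ℝ → ℝ} {μ ν : ℝ}
    (h₁ : HasDerivAt l₁ 1 0) (h₂ : HasDerivAt l₂ 1 0) (hl : l₁ 0 ≠ l₂ 0)
    (hf₁ : HasDerivAt f (f' (l₁ 0)) (l₁ 0)) (hf₂ : HasDerivAt f (f' (l₂ 0)) (l₂ 0)) :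
    HasDerivAt (fun t => f (l₁ t) + slope f (l₁ t) (l₂ t) * (μ + t * ν - l₁ t))
      (f' (l₁ 0) + slope f' (l₁ 0) (l₂ 0) * (μ - l₁ 0) + slope f (l₁ 0) (l₂ 0) * (ν - 1)) 0 := by
  have hgap : l₂ 0 - l₁ 0 ≠ 0 := sub_ne_zero.2 hl.symm
  have hslope := ((hf₂.comp 0 h₂).sub (hf₁.comp 0 h₁)).div (h₂.sub h₁) hgap
  have hweight := (((hasDerivAt_id (0 : ℝ)).mul_const ν).const_add μ).sub h₁
  simp only [slope_def_field]
  refine ((hf₁.comp 0 h₁).add (hslope.mul hweight)).congr_deriv ?_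
  simp only [Pi.sub_apply, Pi.div_apply, Function.comp_apply, id, zero_mul, add_zero]
  field_simp
  ring

lemma star_dotProduct_self_eq_one {w₁ w₂ : ℝ} (hw : w₁ ^ 2 + w₂ ^ 2 = 1) :
    star ![(w₁ : ℂ), w₂] ⬝ᵥ ![(w₁ : ℂ), w₂] = 1 := by
  simp only [dotProduct, Fin.sum_univ_two, Pi.star_apply, Matrix.cons_val_zero,
    Matrix.cons_val_one, Complex.star_def, Complex.conj_ofReal]
  exact_mod_cast (by linear_combination hw : w₁ * w₁ + w₂ * w₂ = 1)

lemma hasDerivAt_re_dotProduct_cfc_diagonal_add_smul_ones {f f' : ℝ → ℝ} {x y : ℝ} (hxy : x ≠ y)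
    (hfx : HasDerivAt f (f' x) x) (hfy : HasDerivAt f (f' y) y) {w₁ w₂ : ℝ}
    (hw : w₁ ^ 2 + w₂ ^ 2 = 1) :
    HasDerivAt (fun t : ℝ =>
        (star ![(w₁ : ℂ), w₂] ⬝ᵥ cfc f (diagonal ![(x : ℂ), y] + t • !![1, 1; 1, 1]) *ᵥ
          ![(w₁ : ℂ), w₂]).re)
      (f' x * w₁ ^ 2 + f' y * w₂ ^ 2 + 2 * slope f x y * (w₁ * w₂)) 0 := by
  set l₁ : ℝ → ℝ := fun t => (x + y) / 2 + t + signedHypot ((x - y) / 2) t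
  set l₂ : ℝ → ℝ := fun t => (x + y) / 2 + t - signedHypot ((x - y) / 2) t
  have hl₁ : l₁ 0 = x := by simp only [l₁, signedHypot_zero_right]; ring
  have hl₂ : l₂ 0 = y := by simp only [l₂, signedHypot_zero_right]; ring
  have hunit : star ![(w₁ : ℂ), w₂] ⬝ᵥ ![(w₁ : ℂ), w₂] = 1 := star_dotProduct_self_eq_one hw
  have hG : (fun t : ℝ =>
      (star ![(w₁ : ℂ), w₂] ⬝ᵥ cfc f (diagonal ![(x : ℂ), y] + t • !![1, 1; 1, 1]) *ᵥ
          ![(w₁ : ℂ), w₂]).re) = fun t =>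
      f (l₁ t) + slope f (l₁ t) (l₂ t) * ((x * w₁ ^ 2 + y * w₂ ^ 2) + t * (w₁ + w₂) ^ 2 - l₁ t) := by
    ext t
    rw [← RCLike.re_eq_complex_re, re_dotProduct_cfc_mulVec_of_spectrum_subset_pair
      isHermitian_diagonal_add_smul_ones
      (spectrum_diagonal_add_smul_ones_subset hxy) f hunit, RCLike.re_eq_complex_re,
      re_dotProduct_diagonal_add_smul_ones_mulVec]
  have h₁ : HasDerivAt l₁ 1 0 :=
    (((hasDerivAt_id 0).const_add _).add (hasDerivAt_signedHypot _)).congr_deriv (add_zero 1)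
  have h₂ : HasDerivAt l₂ 1 0 :=
    (((hasDerivAt_id 0).const_add _).sub (hasDerivAt_signedHypot _)).congr_deriv (sub_zero 1)
  rw [hG]
  refine (hasDerivAt_secant_interpolation h₁ h₂ (by rwa [hl₁, hl₂]) (by rwa [hl₁])
    (by rwa [hl₂])).congr_deriv ?_
  rw [hl₁, hl₂, slope_def_field f']
  have hxy' : x - y ≠ 0 := sub_ne_zero.2 hxy
  field_simp
  linear_combination (x * f' y - y * f' x - (x - y) * slope f x y) * hw

lemma exists_pos_lt_of_hasDerivAt_neg {G : ℝ → ℝ} {g : ℝ} (hG : HasDerivAt G g 0) (hg : g < 0) :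
    ∃ t, 0 < t ∧ G t < G 0 := by
  obtain ⟨t, hslope, ht⟩ :=
    (hG.hasDerivWithinAt.liminf_right_slope_le hg).and_eventually self_mem_nhdsWithin |>.exists
  rw [slope_def_field, sub_zero, div_lt_iff₀ ht, zero_mul, sub_neg] at hslope
  exact ⟨t, ht, hslope⟩

theorem exists_unit_vector_cfc_decreases_general
    (γ : EReal) (I : Set ℝ) (hI : I = {x : ℝ | γ < (x : EReal)})
    (f f' : ℝ → ℝ)
    (hderiv : ∀ x ∈ I, HasDerivAt f (f' x) x)
    (hpos : ∀ x ∈ I, 0 < f' x)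
    (hmono : StrictMonoOn f' I)
    (hconc : ∀ x ∈ I, ∀ y ∈ I, ∀ t ∈ Set.Icc (0:ℝ) 1,
      t * Real.log (f' x) + (1 - t) * Real.log (f' y)
        ≤ Real.log (f' (t * x + (1 - t) * y)))
    (x y : ℝ) (hx : x ∈ I) (hy : y ∈ I) (hxy : x ≠ y)
    (A B : Matrix (Fin 2) (Fin 2) ℂ)
    (hA : A = Matrix.diagonal ![(x : ℂ), (y : ℂ)])
    (hB : B = !![1, 1; 1, 1])
    (hAH : A.IsHermitian)
    (hABH : ∀ t : ℝ, 0 < t → (A + t • B).IsHermitian) :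
    ∃ (w : Fin 2 → ℂ) (t₀ : ℝ) (ht₀ : 0 < t₀),
      star w ⬝ᵥ w = 1 ∧
      (star w ⬝ᵥ ((hABH t₀ ht₀).cfc f).mulVec w).re
        < (star w ⬝ᵥ (hAH.cfc f).mulVec w).re := by
  have hI_conn : I.OrdConnected :=
    hI ▸ ordConnected_Ioi.preimage_mono EReal.coe_strictMono.monotone
  have hlogconc : ConcaveOn ℝ I (log ∘ f') := ⟨hI_conn.convex, fun a ha b hb s t hs ht hst => by
    obtain rfl : t = 1 - s := by linarith
    simpa only [smul_eq_mul, Function.comp_apply] using hconc a ha b hb s ⟨hs, by linarith⟩⟩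
  obtain ⟨w₁, w₂, hw, hneg⟩ := exists_sq_add_sq_eq_one_and_neg (hpos x hx) (hpos y hy)
    (sqrt_mul_lt_slope_of_concaveOn hI_conn hderiv hpos hmono.injOn hlogconc hx hy hxy)
  obtain ⟨t₀, ht₀, hlt⟩ := exists_pos_lt_of_hasDerivAt_neg
    (hasDerivAt_re_dotProduct_cfc_diagonal_add_smul_ones hxy (hderiv x hx) (hderiv y hy) hw) hneg
  refine ⟨![(w₁ : ℂ), w₂], t₀, ht₀, star_dotProduct_self_eq_one hw, ?_⟩
  subst hA hB
  rw [← IsHermitian.cfc_eq, ← IsHermitian.cfc_eq]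
  simpa using hlt

/-- Let `f` be continuously differentiable on `I = (γ, ∞)` with positive, strictly increasing,
log-concave derivative, let `A = diag(x, y)` with distinct `x, y ∈ I`, and let `B` be the 2×2
all-ones matrix. Then there exist a unit vector `w ∈ ℂ²` and `t₀ > 0` with
`⟨f(A + t₀B)w, w⟩ < ⟨f(A)w, w⟩`. -/
theorem exists_unit_vector_cfc_decreases
    (γ : EReal) (hγ : γ ≠ ⊤) (I : Set ℝ) (hI : I = {x : ℝ | γ < (x : EReal)})
    (f f' : ℝ → ℝ)
    (hderiv : ∀ x ∈ I, HasDerivAt f (f' x) x)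
    (hcont : ContinuousOn f' I)
    (hpos : ∀ x ∈ I, 0 < f' x)
    (hmono : StrictMonoOn f' I)
    (hconc : ∀ x ∈ I, ∀ y ∈ I, ∀ t ∈ Set.Icc (0:ℝ) 1,
      t * Real.log (f' x) + (1 - t) * Real.log (f' y)
        ≤ Real.log (f' (t * x + (1 - t) * y)))
    (x y : ℝ) (hx : x ∈ I) (hy : y ∈ I) (hxy : x ≠ y)
    (A B : Matrix (Fin 2) (Fin 2) ℂ)
    (hA : A = Matrix.diagonal ![(x : ℂ), (y : ℂ)])
    (hB : B = !![1, 1; 1, 1])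
    (hAH : A.IsHermitian)
    (hABH : ∀ t : ℝ, 0 < t → (A + t • B).IsHermitian) :
    ∃ (w : Fin 2 → ℂ) (t₀ : ℝ) (ht₀ : 0 < t₀),
      star w ⬝ᵥ w = 1 ∧
      (star w ⬝ᵥ ((hABH t₀ ht₀).cfc f).mulVec w).re
        < (star w ⬝ᵥ (hAH.cfc f).mulVec w).re :=
  exists_unit_vector_cfc_decreases_general γ I hI f f' hderiv hpos hmono hconc x y hx hy hxy A B hA
    hB hAH hABH
end

section
/- Let I = (γ, ∞) with γ ∈ ℝ ∪ {−∞}, and let f : I → ℝ be continuously differentiable with f'(x) > 0 for all x ∈ I, f' strictly monotone increasing on I, and log ∘ f' concave on I. Then for all x, y ∈ I with x ≠ y, one has f'(x)·f'(y) < ((f(x) − f(y))/(x − y))². -/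
/-! For `x < y` put `u t = t y + (1 - t) x` and `v t = t x + (1 - t) y`. Log-concavity of `f'`
gives `f'(u) f'(v) ≥ f'(x) f'(y)`, and since `u > v` for `t > 1/2` strict monotonicity makes the
arithmetic-geometric mean inequality strict: `f'(u) + f'(v) > 2 √(f'(x) f'(y))`. This sum is, up to
the factor `y - x`, the derivative of `t ↦ f(u t) - f(v t)`, which vanishes at `t = 1/2` and equals
`f y - f x` at `t = 1`; the mean value inequality on `[1/2, 1]` yields
`√(f'(x) f'(y)) < (f y - f x) / (y - x)`. -/

open Real Set

theorem ConcaveOn.add_le_map_add_map_swap {s : Set ℝ} {φ : ℝ → ℝ} (h : ConcaveOn ℝ s φ)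
    {x y t : ℝ} (hx : x ∈ s) (hy : y ∈ s) (ht : t ∈ Icc (0 : ℝ) 1) :
    φ x + φ y ≤ φ (t * x + (1 - t) * y) + φ (t * y + (1 - t) * x) := by
  have hxy := h.2 hx hy ht.1 (sub_nonneg.2 ht.2) (add_sub_cancel t 1)
  have hyx := h.2 hy hx ht.1 (sub_nonneg.2 ht.2) (add_sub_cancel t 1)
  simp only [smul_eq_mul] at hxy hyx
  linarith

theorem mul_le_mul_swap_of_concaveOn_log {s : Set ℝ} {g : ℝ → ℝ} (hpos : ∀ x ∈ s, 0 < g x)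
    (hconc : ConcaveOn ℝ s (log ∘ g)) {x y t : ℝ} (hx : x ∈ s) (hy : y ∈ s)
    (ht : t ∈ Icc (0 : ℝ) 1) :
    g x * g y ≤ g (t * x + (1 - t) * y) * g (t * y + (1 - t) * x) := by
  have hv := hconc.1 hx hy ht.1 (sub_nonneg.2 ht.2) (add_sub_cancel t 1)
  have hu := hconc.1 hy hx ht.1 (sub_nonneg.2 ht.2) (add_sub_cancel t 1)
  simp only [smul_eq_mul] at hu hv
  rw [← log_le_log_iff (mul_pos (hpos x hx) (hpos y hy)) (mul_pos (hpos _ hv) (hpos _ hu)),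
    log_mul (hpos x hx).ne' (hpos y hy).ne', log_mul (hpos _ hv).ne' (hpos _ hu).ne']
  exact hconc.add_le_map_add_map_swap hx hy ht

theorem two_mul_sqrt_lt_add {P a b : ℝ} (hP : P ≤ a * b) (ha : 0 < a) (hb : 0 < b) (hab : a ≠ b) :
    2 * √P < a + b :=
  calc 2 * √P ≤ 2 * √(a * b) := by gcongr
    _ < a + b := by
      refine lt_of_pow_lt_pow_left₀ 2 (by positivity) ?_
      rw [mul_pow, sq_sqrt (by positivity)]
      nlinarith [sq_pos_of_ne_zero (sub_ne_zero.2 hab)]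

theorem HasDerivAt.comp_convexCombination {f : ℝ → ℝ} {f' x y t : ℝ}
    (hf : HasDerivAt f f' (t * x + (1 - t) * y)) :
    HasDerivAt (fun t => f (t * x + (1 - t) * y)) (f' * (x - y)) t := by
  have hline : HasDerivAt (fun t : ℝ => t * x + (1 - t) * y) (x - y) t := by
    rw [show x - y = 1 * x + (0 - 1) * y by ring]
    exact ((hasDerivAt_id' t).mul_const x).add
      (((hasDerivAt_const t 1).sub (hasDerivAt_id' t)).mul_const y)
  exact hf.comp t hline

theorem sqrt_mul_lt_slope_of_concaveOn_log {I : Set ℝ} {f f' : ℝ → ℝ}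
    (hderiv : ∀ x ∈ I, HasDerivAt f (f' x) x) (hpos : ∀ x ∈ I, 0 < f' x)
    (hmono : StrictMonoOn f' I) (hconc : ConcaveOn ℝ I (log ∘ f'))
    {x y : ℝ} (hx : x ∈ I) (hy : y ∈ I) (hxy : x < y) :
    √(f' x * f' y) < slope f x y := by
  have hv : ∀ t ∈ Icc (0 : ℝ) 1, t * x + (1 - t) * y ∈ I := fun t ht =>
    hconc.1 hx hy ht.1 (sub_nonneg.2 ht.2) (add_sub_cancel t 1)
  have hu : ∀ t ∈ Icc (0 : ℝ) 1, t * y + (1 - t) * x ∈ I := fun t ht =>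
    hconc.1 hy hx ht.1 (sub_nonneg.2 ht.2) (add_sub_cancel t 1)
  set g : ℝ → ℝ := fun t => f (t * y + (1 - t) * x) - f (t * x + (1 - t) * y)
  have hg : ∀ t ∈ Icc (0 : ℝ) 1, HasDerivAt g
      (f' (t * y + (1 - t) * x) * (y - x) - f' (t * x + (1 - t) * y) * (x - y)) t :=
    fun t ht => (hderiv _ (hu t ht)).comp_convexCombination.sub
      (hderiv _ (hv t ht)).comp_convexCombination
  have hhalf : Icc (1 / 2 : ℝ) 1 ⊆ Icc 0 1 := Icc_subset_Icc_left (by norm_num)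
  have hderiv_gt : ∀ t ∈ interior (Icc (1 / 2 : ℝ) 1),
      2 * √(f' x * f' y) * (y - x) < deriv g t := by
    rw [interior_Icc]
    intro t ht
    have ht' := hhalf (Ioo_subset_Icc_self ht)
    have hvu : t * x + (1 - t) * y < t * y + (1 - t) * x := by nlinarith [ht.1]
    rw [(hg t ht').deriv]
    have := two_mul_sqrt_lt_add (mul_le_mul_swap_of_concaveOn_log hpos hconc hx hy ht')
      (hpos _ (hv t ht')) (hpos _ (hu t ht')) (hmono (hv t ht') (hu t ht') hvu).ne
    nlinarith
  have hmvt := (convex_Icc (1 / 2 : ℝ) 1).mul_sub_lt_image_sub_of_lt_deriv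
    (fun t ht => (hg t (hhalf ht)).continuousAt.continuousWithinAt)
    (fun t ht => (hg t (hhalf (interior_subset ht))).differentiableAt.differentiableWithinAt)
    hderiv_gt (1 / 2) (left_mem_Icc.2 (by norm_num)) 1 (right_mem_Icc.2 (by norm_num))
    (by norm_num)
  have hg_half : g (1 / 2) = 0 := by simp only [g]; ring_nf
  have hg_one : g 1 = f y - f x := by simp [g]
  rw [hg_half, hg_one] at hmvt
  rw [slope_def_field, lt_div_iff₀ (sub_pos.2 hxy)]
  linarith

theorem deriv_mul_deriv_lt_sq_divided_difference_general
    (γ : EReal) (I : Set ℝ) (hI : I = {x : ℝ | γ < (x : EReal)})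
    (f f' : ℝ → ℝ)
    (hderiv : ∀ x ∈ I, HasDerivAt f (f' x) x)
    (hpos : ∀ x ∈ I, 0 < f' x)
    (hmono : StrictMonoOn f' I)
    (hconc : ∀ x ∈ I, ∀ y ∈ I, ∀ t ∈ Set.Icc (0:ℝ) 1,
      t * Real.log (f' x) + (1 - t) * Real.log (f' y)
        ≤ Real.log (f' (t * x + (1 - t) * y))) :
    ∀ x ∈ I, ∀ y ∈ I, x ≠ y → f' x * f' y < ((f x - f y) / (x - y)) ^ 2 := by
  have hconv : Convex ℝ I := convex_iff_ordConnected.2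
    ⟨fun a ha _ _ _ hz => by rw [hI] at ha ⊢; exact ha.trans_le (EReal.coe_le_coe_iff.2 hz.1)⟩
  have hlog : ConcaveOn ℝ I (log ∘ f') := ⟨hconv, fun x hx y hy a b ha _ hab => by
    obtain rfl : b = 1 - a := by linarith
    simpa using hconc x hx y hy a ⟨ha, by linarith⟩⟩
  have hsq : ∀ x ∈ I, ∀ y ∈ I, x < y → f' x * f' y < slope f x y ^ 2 := fun x hx y hy hxy =>
    have h := sqrt_mul_lt_slope_of_concaveOn_log hderiv hpos hmono hlog hx hy hxy
    (sqrt_lt' ((sqrt_nonneg _).trans_lt h)).1 h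
  intro x hx y hy hxy
  rw [← slope_def_field, slope_comm]
  rcases hxy.lt_or_gt with h | h
  · exact hsq x hx y hy h
  · rw [mul_comm, slope_comm]
    exact hsq y hy x hx h

/-- If `f` is continuously differentiable on `I = (γ, ∞)` with positive, strictly increasing,
log-concave derivative, then `f'(x)·f'(y) < ((f(x) − f(y))/(x − y))²` for distinct `x, y ∈ I`. -/
theorem deriv_mul_deriv_lt_sq_divided_difference
    (γ : EReal) (hγ : γ ≠ ⊤) (I : Set ℝ) (hI : I = {x : ℝ | γ < (x : EReal)})
    (f f' : ℝ → ℝ)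
    (hderiv : ∀ x ∈ I, HasDerivAt f (f' x) x)
    (hcont : ContinuousOn f' I)
    (hpos : ∀ x ∈ I, 0 < f' x)
    (hmono : StrictMonoOn f' I)
    (hconc : ∀ x ∈ I, ∀ y ∈ I, ∀ t ∈ Set.Icc (0:ℝ) 1,
      t * Real.log (f' x) + (1 - t) * Real.log (f' y)
        ≤ Real.log (f' (t * x + (1 - t) * y))) :
    ∀ x ∈ I, ∀ y ∈ I, x ≠ y → f' x * f' y < ((f x - f y) / (x - y)) ^ 2 :=
  deriv_mul_deriv_lt_sq_divided_difference_general γ I hI f f' hderiv hpos hmono hconc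
end

section
/- Let I = (γ, ∞) with γ ∈ ℝ ∪ {−∞}, and let f : I → ℝ be continuously differentiable with f'(x) > 0 for all x ∈ I, f' strictly monotone increasing on I, and log ∘ f' concave on I. Then for all x, y ∈ I with x ≠ y, one has log f'(x) + log f'(y) < 2·log(∫₀¹ f'(tx + (1−t)y) dt). -/
/-!
By log-concavity, `f'` on the segment from `y` to `x` lies above `exp` of the affine
interpolation between `log f'(y)` and `log f'(x)`. Integrating this bound over `[0, 1]` gives the
logarithmic mean of `f'(x)` and `f'(y)`, which strictly exceeds their geometric mean because
`f'(x) ≠ f'(y)` by strict monotonicity.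
-/

open Real Set MeasureTheory

/-- The geometric mean of `exp a` and `exp b` is below their logarithmic mean; with
`u = (a - b) / 2` this is `u < sinh u`. -/
theorem Real.exp_add_div_two_lt_div_sub {a b : ℝ} (hab : a ≠ b) :
    exp ((a + b) / 2) < (exp a - exp b) / (a - b) := by
  wlog hba : b < a generalizing a b
  · have := this hab.symm (hab.lt_or_gt.resolve_right hba)
    rwa [add_comm, ← neg_sub a, ← neg_sub (exp a), neg_div_neg_eq] at this
  set m := (a + b) / 2
  set u := (a - b) / 2
  have hu : u < sinh u := self_lt_sinh_iff.mpr (by simp only [u]; linarith)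
  have hexp_a : exp a = exp m * exp u := by rw [← exp_add]; congr 1; ring
  have hexp_b : exp b = exp m * exp (-u) := by rw [← exp_add]; congr 1; ring
  have hsub : a - b = 2 * u := by ring
  rw [sinh_eq] at hu
  rw [lt_div_iff₀ (by linarith), hexp_a, hexp_b, hsub]
  nlinarith [mul_lt_mul_of_pos_left hu (exp_pos m)]

theorem integral_exp_mul_add_one_sub_mul {a b : ℝ} (hab : a ≠ b) :
    ∫ t in (0 : ℝ)..1, exp (t * a + (1 - t) * b) = (exp a - exp b) / (a - b) := by
  have hba : a - b ≠ 0 := sub_ne_zero.mpr hab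
  have h := intervalIntegral.integral_comp_mul_add (a := 0) (b := 1) exp hba b
  simp only [mul_zero, zero_add, mul_one, sub_add_cancel, integral_exp, smul_eq_mul] at h
  rw [← inv_mul_eq_div, ← h]
  congr 1 with t
  ring_nf

theorem add_lt_two_mul_log_integral {g : ℝ → ℝ} {a b : ℝ} (hab : a ≠ b)
    (hg : IntervalIntegrable g volume 0 1)
    (hle : ∀ t ∈ Icc (0 : ℝ) 1, exp (t * a + (1 - t) * b) ≤ g t) :
    a + b < 2 * log (∫ t in (0 : ℝ)..1, g t) := by
  have hexp_int : IntervalIntegrable (fun t : ℝ ↦ exp (t * a + (1 - t) * b)) volume 0 1 :=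
    (by fun_prop : Continuous _).intervalIntegrable 0 1
  have hlt : exp ((a + b) / 2) < ∫ t in (0 : ℝ)..1, g t :=
    calc exp ((a + b) / 2) < (exp a - exp b) / (a - b) := exp_add_div_two_lt_div_sub hab
      _ = ∫ t in (0 : ℝ)..1, exp (t * a + (1 - t) * b) := (integral_exp_mul_add_one_sub_mul hab).symm
      _ ≤ ∫ t in (0 : ℝ)..1, g t := intervalIntegral.integral_mono_on zero_le_one hexp_int hg hle
  have := (lt_log_iff_exp_lt ((exp_pos _).trans hlt)).mpr hlt
  linarith

theorem EReal.convex_setOf_lt_coe (γ : EReal) : Convex ℝ {x : ℝ | γ < (x : EReal)} :=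
  (ordConnected_Ioi.preimage_mono EReal.coe_strictMono.monotone).convex

theorem log_deriv_add_log_deriv_lt_general
    (γ : EReal) (I : Set ℝ) (hI : I = {x : ℝ | γ < (x : EReal)})
    (f' : ℝ → ℝ)
    (hcont : ContinuousOn f' I)
    (hpos : ∀ x ∈ I, 0 < f' x)
    (hmono : StrictMonoOn f' I)
    (hconc : ∀ x ∈ I, ∀ y ∈ I, ∀ t ∈ Set.Icc (0:ℝ) 1,
      t * Real.log (f' x) + (1 - t) * Real.log (f' y)
        ≤ Real.log (f' (t * x + (1 - t) * y))) :
    ∀ x ∈ I, ∀ y ∈ I, x ≠ y →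
      Real.log (f' x) + Real.log (f' y)
        < 2 * Real.log (∫ t in (0:ℝ)..1, f' (t * x + (1 - t) * y)) := by
  intro x hx y hy hxy
  have hseg : MapsTo (fun t : ℝ ↦ t * x + (1 - t) * y) (Icc 0 1) I := fun t ht ↦
    (hI ▸ EReal.convex_setOf_lt_coe γ) hx hy ht.1 (sub_nonneg.mpr ht.2) (add_sub_cancel _ _)
  have hlog_ne : log (f' x) ≠ log (f' y) := fun h ↦
    hxy <| hmono.injOn hx hy <| log_injOn_pos (hpos x hx) (hpos y hy) h
  have hint : IntervalIntegrable (fun t ↦ f' (t * x + (1 - t) * y)) volume 0 1 :=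
    (hcont.comp (by fun_prop) hseg).intervalIntegrable_of_Icc zero_le_one
  refine add_lt_two_mul_log_integral hlog_ne hint fun t ht ↦ ?_
  exact (le_log_iff_exp_le (hpos _ (hseg ht))).mp (hconc x hx y hy t ht)

/-- If `f` is continuously differentiable on `I = (γ, ∞)` with positive, strictly increasing,
log-concave derivative, then for distinct `x, y ∈ I` one has
`log f'(x) + log f'(y) < 2 log (∫₀¹ f'(tx + (1−t)y) dt)`. -/
theorem log_deriv_add_log_deriv_lt
    (γ : EReal) (hγ : γ ≠ ⊤) (I : Set ℝ) (hI : I = {x : ℝ | γ < (x : EReal)})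
    (f f' : ℝ → ℝ)
    (hderiv : ∀ x ∈ I, HasDerivAt f (f' x) x)
    (hcont : ContinuousOn f' I)
    (hpos : ∀ x ∈ I, 0 < f' x)
    (hmono : StrictMonoOn f' I)
    (hconc : ∀ x ∈ I, ∀ y ∈ I, ∀ t ∈ Set.Icc (0:ℝ) 1,
      t * Real.log (f' x) + (1 - t) * Real.log (f' y)
        ≤ Real.log (f' (t * x + (1 - t) * y))) :
    ∀ x ∈ I, ∀ y ∈ I, x ≠ y →
      Real.log (f' x) + Real.log (f' y)
        < 2 * Real.log (∫ t in (0:ℝ)..1, f' (t * x + (1 - t) * y)) :=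
  log_deriv_add_log_deriv_lt_general γ I hI f' hcont hpos hmono hconc
end

section
/- Let I = (γ, ∞) with γ ∈ ℝ ∪ {−∞} and let g : I → ℝ be continuous, positive, strictly monotone increasing, with log ∘ g concave on I. Then the 2×2 real symmetric matrix [[g(x), c], [c, g(y)]], where c = (1/(x−y))·∫ from y to x of g, has negative determinant for all x, y ∈ I with x ≠ y, and hence has a negative eigenvalue. -/
/-!
For `u` between `y` and `x`, log-concavity gives `g x * g y ≤ g u * g (x + y - u)`, so by AM–GM
the symmetrised integrand `(g u + g (x + y - u)) / 2` is at least `√(g x * g y)`, strictly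
so off the midpoint because `g` is strictly increasing. Hence the mean value `c` of `g` on the
segment exceeds the geometric mean of `g x` and `g y`, i.e. `g x * g y - c ^ 2 < 0`, and a real
symmetric matrix with negative determinant has a negative eigenvalue.
-/

open Real MeasureTheory intervalIntegral

theorem Matrix.IsHermitian.exists_neg_eigenvalue_of_det_neg {n : Type*} [Fintype n]
    [DecidableEq n] {A : Matrix n n ℝ} (hA : A.IsHermitian) (hdet : A.det < 0) :
    ∃ μ : ℝ, μ < 0 ∧ ∃ v : n → ℝ, v ≠ 0 ∧ A.mulVec v = μ • v := by
  by_contra! h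
  have heig (i : n) : 0 ≤ hA.eigenvalues i := by
    by_contra! hi
    exact h _ hi _ (by simpa using hA.eigenvectorBasis.orthonormal.ne_zero i)
      (hA.mulVec_eigenvectorBasis i)
  rw [hA.det_eq_prod_eigenvalues] at hdet
  exact hdet.not_ge (Finset.prod_nonneg fun i _ => heig i)

theorem mul_sub_lt_intervalIntegral_of_lt_add_reflect {f : ℝ → ℝ} {a b m : ℝ} (hab : a < b)
    (hf : IntervalIntegrable f volume a b)
    (hlt : ∀ u ∈ Set.Ioo a ((a + b) / 2), 2 * m < f u + f (a + b - u)) :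
    m * (b - a) < ∫ u in a..b, f u := by
  set c := (a + b) / 2 with hc
  have hac : a < c := by linarith
  have hmid : c ∈ Set.uIcc a b := Set.Icc_subset_uIcc ⟨hac.le, by linarith⟩
  have hfac : IntervalIntegrable f volume a c := hf.mono_set (Set.uIcc_subset_uIcc_left hmid)
  have hfcb : IntervalIntegrable f volume c b := hf.mono_set (Set.uIcc_subset_uIcc_right hmid)
  have hrefl := hfcb.symm.comp_sub_left (a + b)
  rw [add_sub_cancel_right, show a + b - c = c by ring] at hrefl
  -- the right half `[c, b]` is reflected onto `[a, c]` by `u ↦ a + b - u`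
  have hsplit : ∫ u in a..b, f u = ∫ u in a..c, (f u + f (a + b - u)) := by
    rw [← integral_add_adjacent_intervals hfac hfcb, integral_add hfac hrefl,
      integral_comp_sub_left, add_sub_cancel_left, show a + b - c = c by ring]
  have hpos : 0 < ∫ u in a..c, (f u + f (a + b - u) - 2 * m) :=
    intervalIntegral_pos_of_pos_on ((hfac.add hrefl).sub intervalIntegrable_const)
      (fun u hu => by linarith [hlt u hu]) hac
  rw [integral_sub (hfac.add hrefl) intervalIntegrable_const, intervalIntegral.integral_const,
    smul_eq_mul, ← hsplit, show (c - a) * (2 * m) = m * (b - a) by rw [hc]; ring] at hpos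
  linarith

theorem mul_le_mul_of_concaveOn_log {s : Set ℝ} {g : ℝ → ℝ}
    (hlog : ConcaveOn ℝ s fun x => log (g x)) (hpos : ∀ x ∈ s, 0 < g x) {x y a b : ℝ}
    (hx : x ∈ s) (hy : y ∈ s) (ha : 0 ≤ a) (hb : 0 ≤ b) (hab : a + b = 1) :
    g x * g y ≤ g (a * x + b * y) * g (b * x + a * y) := by
  have h₁ := hlog.2 hx hy ha hb hab
  have h₂ := hlog.2 hx hy hb ha (by rw [add_comm, hab])
  have hpos₁ := hpos _ (hlog.1 hx hy ha hb hab)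
  have hpos₂ := hpos _ (hlog.1 hx hy hb ha (by rw [add_comm, hab]))
  simp only [smul_eq_mul] at h₁ h₂ hpos₁ hpos₂
  rw [← log_le_log_iff (mul_pos (hpos x hx) (hpos y hy)) (mul_pos hpos₁ hpos₂),
    log_mul (hpos x hx).ne' (hpos y hy).ne', log_mul hpos₁.ne' hpos₂.ne']
  linear_combination h₁ + h₂ - (log (g x) + log (g y)) * hab

theorem sqrt_mul_mul_sub_lt_intervalIntegral {s : Set ℝ} {g : ℝ → ℝ}
    (hlog : ConcaveOn ℝ s fun x => log (g x)) (hpos : ∀ x ∈ s, 0 < g x)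
    (hmono : StrictMonoOn g s) {x y : ℝ} (hx : x ∈ s) (hy : y ∈ s) (hyx : y < x) :
    √(g x * g y) * (x - y) < ∫ u in y..x, g u := by
  have hsub : Set.uIcc y x ⊆ s := (convex_iff_ordConnected.1 hlog.1).uIcc_subset hy hx
  refine mul_sub_lt_intervalIntegral_of_lt_add_reflect hyx
    (hmono.monotoneOn.mono hsub).intervalIntegrable fun u hu => ?_
  obtain ⟨hyu, hux⟩ := hu
  have hmem : u ∈ Set.uIcc y x := Set.Icc_subset_uIcc ⟨hyu.le, by linarith⟩
  have hmem' : y + x - u ∈ Set.uIcc y x := Set.Icc_subset_uIcc ⟨by linarith, by linarith⟩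
  have hprod : g x * g y ≤ g u * g (y + x - u) := by
    have hxy : x - y ≠ 0 := sub_ne_zero.2 hyx.ne'
    convert mul_le_mul_of_concaveOn_log hlog hpos hx hy (a := (u - y) / (x - y))
      (b := (x - u) / (x - y)) (div_nonneg (by linarith) (by linarith))
      (div_nonneg (by linarith) (by linarith)) (by field_simp; ring) using 3
    · field_simp; ring
    · field_simp; ring
  have hlt : g u < g (y + x - u) := hmono (hsub hmem) (hsub hmem') (by linarith)
  have hgu := hpos u (hsub hmem)
  have hsqrt : √(g x * g y) ^ 2 = g x * g y :=
    sq_sqrt (mul_pos (hpos x hx) (hpos y hy)).le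
  nlinarith [sqrt_nonneg (g x * g y)]

theorem sqrt_mul_lt_inv_sub_mul_intervalIntegral {s : Set ℝ} {g : ℝ → ℝ}
    (hlog : ConcaveOn ℝ s fun x => log (g x)) (hpos : ∀ x ∈ s, 0 < g x)
    (hmono : StrictMonoOn g s) {x y : ℝ} (hx : x ∈ s) (hy : y ∈ s) (hxy : x ≠ y) :
    √(g x * g y) < (x - y)⁻¹ * ∫ u in y..x, g u := by
  wlog hyx : y < x generalizing x y
  · have hswap := this hy hx hxy.symm (hxy.lt_or_gt.resolve_right hyx)
    rwa [mul_comm (g y), integral_symm, ← neg_sub x y, inv_neg, neg_mul_neg] at hswap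
  rw [lt_inv_mul_iff₀ (sub_pos.2 hyx), mul_comm]
  exact sqrt_mul_mul_sub_lt_intervalIntegral hlog hpos hmono hx hy hyx

theorem det_neg_and_exists_neg_eigenvalue_general
    (γ : EReal) (I : Set ℝ) (hI : I = {x : ℝ | γ < (x : EReal)})
    (g : ℝ → ℝ)
    (hpos : ∀ x ∈ I, 0 < g x)
    (hmono : StrictMonoOn g I)
    (hconc : ∀ x ∈ I, ∀ y ∈ I, ∀ t ∈ Set.Icc (0:ℝ) 1,
      t * Real.log (g x) + (1 - t) * Real.log (g y)
        ≤ Real.log (g (t * x + (1 - t) * y))) :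
    ∀ x ∈ I, ∀ y ∈ I, x ≠ y →
      ∀ c : ℝ, c = (x - y)⁻¹ * (∫ u in y..x, g u) →
        (Matrix.det !![g x, c; c, g y] < 0 ∧
          ∃ μ : ℝ, μ < 0 ∧ ∃ v : Fin 2 → ℝ, v ≠ 0 ∧
            (!![g x, c; c, g y]).mulVec v = μ • v) := by
  intro x hx y hy hxy c hc
  have hconvex : Convex ℝ I := by
    subst hI
    exact convex_iff_ordConnected.2 ⟨fun a ha _ _ z hz => ha.trans_le (EReal.coe_le_coe hz.1)⟩
  have hlog : ConcaveOn ℝ I fun x => log (g x) := ⟨hconvex, fun a ha b hb t u ht hu htu => by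
    obtain rfl : u = 1 - t := by linarith
    simpa using hconc a ha b hb t ⟨ht, by linarith⟩⟩
  have hlt : √(g x * g y) < c :=
    hc ▸ sqrt_mul_lt_inv_sub_mul_intervalIntegral hlog hpos hmono hx hy hxy
  have hdet : Matrix.det !![g x, c; c, g y] < 0 := by
    rw [Matrix.det_fin_two_of]
    nlinarith [sq_sqrt (mul_pos (hpos x hx) (hpos y hy)).le, sqrt_nonneg (g x * g y)]
  have hsymm : (!![g x, c; c, g y]).IsHermitian := by
    ext i j; fin_cases i <;> fin_cases j <;> rfl
  exact ⟨hdet, hsymm.exists_neg_eigenvalue_of_det_neg hdet⟩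

/-- If `g` is continuous, positive, strictly increasing and log-concave on `I = (γ, ∞)`, then
for distinct `x, y ∈ I` the symmetric matrix `[[g x, c], [c, g y]]`, where
`c = (x − y)⁻¹ ∫_y^x g`, has negative determinant and hence a negative eigenvalue. -/
theorem det_neg_and_exists_neg_eigenvalue
    (γ : EReal) (hγ : γ ≠ ⊤) (I : Set ℝ) (hI : I = {x : ℝ | γ < (x : EReal)})
    (g : ℝ → ℝ)
    (hcont : ContinuousOn g I)
    (hpos : ∀ x ∈ I, 0 < g x)
    (hmono : StrictMonoOn g I)
    (hconc : ∀ x ∈ I, ∀ y ∈ I, ∀ t ∈ Set.Icc (0:ℝ) 1,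
      t * Real.log (g x) + (1 - t) * Real.log (g y)
        ≤ Real.log (g (t * x + (1 - t) * y))) :
    ∀ x ∈ I, ∀ y ∈ I, x ≠ y →
      ∀ c : ℝ, c = (x - y)⁻¹ * (∫ u in y..x, g u) →
        (Matrix.det !![g x, c; c, g y] < 0 ∧
          ∃ μ : ℝ, μ < 0 ∧ ∃ v : Fin 2 → ℝ, v ≠ 0 ∧
            (!![g x, c; c, g y]).mulVec v = μ • v) :=
  det_neg_and_exists_neg_eigenvalue_general γ I hI g hpos hmono hconc
end

section
/- Let H be a complex Hilbert space and T ∈ B(H) a bounded self-adjoint operator. Let x, y ∈ ℝ and let (uₙ) and (vₙ) be sequences of unit vectors in H with ⟨uₘ, vₙ⟩ = 0 for all m, n, such that ‖T uₙ − x uₙ‖ → 0 and ‖T vₙ − y vₙ‖ → 0. For each n let Kₙ = span{uₙ, vₙ}, let Eₙ be the orthogonal projection onto Kₙ^⊥, and set ψₙ := x·(uₙ ⊗ uₙ) + y·(vₙ ⊗ vₙ) + Eₙ T Eₙ. Then ‖ψₙ − T‖ ≤ 2(‖T uₙ − x uₙ‖ + ‖T vₙ − y vₙ‖); in particular ψₙ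 → T in the operator norm topology. -/
open scoped InnerProductSpace

/-- The rank-one operator `φ ⊗ ψ : ξ ↦ ⟨ξ, ψ⟩ φ` on a complex Hilbert space. -/
noncomputable def rankOneOp {H : Type*} [NormedAddCommGroup H] [InnerProductSpace ℂ H]
    (φ ψ : H) : H →L[ℂ] H :=
  (innerSL ℂ ψ).smulRight φ

set_option synthInstance.maxHeartbeats 1000000

/-! With `P = u ⊗ u + v ⊗ v` the projection onto `span {u, v}` and `E = 1 - P`, the identity
`ETE - T = -TP - PTE` together with `TP = Tu ⊗ u + Tv ⊗ v` gives
`ψ - T = -((Tu - xu) ⊗ u + (Tv - yv) ⊗ v) - (u ⊗ u) TE - (v ⊗ v) TE`.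
As `T` and `E` are self-adjoint and `Eu = 0`, `(u ⊗ u) TE = u ⊗ E(Tu - xu)`, and similarly for `v`,
so each of the four terms is bounded by one of the two defects. -/

open InnerProductSpace ContinuousLinearMap

section
variable {𝕜 H : Type*} [RCLike 𝕜] [NormedAddCommGroup H] [InnerProductSpace 𝕜 H] [CompleteSpace H]

theorem starProjection_orthogonal_span_pair {u v : H} (hu : ‖u‖ = 1) (hv : ‖v‖ = 1)
    (huv : ⟪u, v⟫_𝕜 = 0) :
    (Submodule.span 𝕜 {u, v})ᗮ.starProjection = 1 - (rankOne 𝕜 u u + rankOne 𝕜 v v) := by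
  ext w
  have hvu : ⟪v, u⟫_𝕜 = 0 := inner_eq_zero_symm.mp huv
  refine Submodule.eq_starProjection_of_mem_orthogonal' (z := ⟪u, w⟫_𝕜 • u + ⟪v, w⟫_𝕜 • v)
    ?_ ?_ (by simp)
  · rw [← Submodule.span_singleton_le_iff_mem, ← Submodule.isOrtho_iff_le, Submodule.isOrtho_span]
    simp [inner_sub_left, inner_add_left, inner_smul_left, hu, hv, huv, hvu,
      inner_self_eq_norm_sq_to_K]
  · exact Submodule.le_orthogonal_orthogonal _ <| add_mem
      (Submodule.smul_mem _ _ (Submodule.subset_span (by simp)))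
      (Submodule.smul_mem _ _ (Submodule.subset_span (by simp)))

theorem norm_rankOne_self_comp_comp_le {u : H} (hu : ‖u‖ = 1) {T E : H →L[𝕜] H}
    (hT : IsSelfAdjoint T) (hE : IsSelfAdjoint E) (hE1 : ‖E‖ ≤ 1) (hEu : E u = 0) (c : 𝕜) :
    ‖rankOne 𝕜 u u ∘L T ∘L E‖ ≤ ‖T u - c • u‖ := by
  have hadj : adjoint (T ∘L E) u = E (T u - c • u) := by
    simp [adjoint_comp, hT.adjoint_eq, hE.adjoint_eq, hEu]
  rw [rankOne_comp, hadj, norm_rankOne, hu, one_mul]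
  exact E.le_of_opNorm_le hE1 _ |>.trans_eq (one_mul _)

theorem norm_compression_sub_le {T : H →L[𝕜] H} (hT : IsSelfAdjoint T) {u v : H}
    (hu : ‖u‖ = 1) (hv : ‖v‖ = 1) (huv : ⟪u, v⟫_𝕜 = 0) (x y : 𝕜) :
    let E := (Submodule.span 𝕜 {u, v})ᗮ.starProjection
    ‖x • rankOne 𝕜 u u + y • rankOne 𝕜 v v + E ∘L T ∘L E - T‖ ≤
      2 * (‖T u - x • u‖ + ‖T v - y • v‖) := by
  intro E
  set P := rankOne 𝕜 u u + rankOne 𝕜 v v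
  have hEP : E = 1 - P := starProjection_orthogonal_span_pair hu hv huv
  have hdecomp : x • rankOne 𝕜 u u + y • rankOne 𝕜 v v + E ∘L T ∘L E - T =
      -(rankOne 𝕜 (T u - x • u) u + rankOne 𝕜 (T v - y • v) v) -
        (rankOne 𝕜 u u ∘L T ∘L E + rankOne 𝕜 v v ∘L T ∘L E) := by
    have hcompress : E ∘L T ∘L E - T = -(T ∘L P) - P ∘L T ∘L E := by
      rw [hEP]; simp only [← mul_def]; noncomm_ring
    rw [add_sub_assoc, hcompress, comp_add, comp_rankOne, comp_rankOne, add_comp]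
    simp only [map_sub, map_smul, sub_apply, smul_apply]
    abel
  have hEsa : IsSelfAdjoint E := isSelfAdjoint_starProjection _
  have hEu : E u = 0 :=
    Submodule.starProjection_orthogonal_apply_eq_zero (Submodule.subset_span (by simp))
  have hEv : E v = 0 :=
    Submodule.starProjection_orthogonal_apply_eq_zero (Submodule.subset_span (by simp))
  have hE1 : ‖E‖ ≤ 1 := Submodule.starProjection_norm_le _
  rw [hdecomp]
  refine (norm_sub_le _ _).trans ?_
  rw [norm_neg]
  calc _ ≤ (‖rankOne 𝕜 (T u - x • u) u‖ + ‖rankOne 𝕜 (T v - y • v) v‖) +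
          (‖rankOne 𝕜 u u ∘L T ∘L E‖ + ‖rankOne 𝕜 v v ∘L T ∘L E‖) :=
        add_le_add (norm_add_le _ _) (norm_add_le _ _)
    _ ≤ (‖T u - x • u‖ + ‖T v - y • v‖) + (‖T u - x • u‖ + ‖T v - y • v‖) := by
        rw [norm_rankOne, norm_rankOne, hu, hv, mul_one, mul_one]
        gcongr
        · exact norm_rankOne_self_comp_comp_le hu hT hEsa hE1 hEu x
        · exact norm_rankOne_self_comp_comp_le hv hT hEsa hE1 hEv y
    _ = _ := by ring

end

theorem rankOneOp_eq_rankOne {H : Type*} [NormedAddCommGroup H] [InnerProductSpace ℂ H]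
    (φ ψ : H) : rankOneOp φ ψ = rankOne ℂ φ ψ := rfl

/-- If `(uₙ)`, `(vₙ)` are mutually orthogonal approximate eigenvectors of a self-adjoint
operator `T` for `x` and `y` respectively, and
`ψₙ = x·(uₙ ⊗ uₙ) + y·(vₙ ⊗ vₙ) + Eₙ T Eₙ`, with `Eₙ` the orthogonal projection onto
`(span{uₙ, vₙ})ᗮ`, then `‖ψₙ − T‖ ≤ 2(‖Tuₙ − x uₙ‖ + ‖Tvₙ − y vₙ‖)`; in particular
`ψₙ → T` in operator norm. -/
theorem psi_tendsto_of_approx_eigenvectors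
    {H : Type*} [NormedAddCommGroup H] [InnerProductSpace ℂ H] [CompleteSpace H]
    (T : H →L[ℂ] H) (hT : IsSelfAdjoint T) (x y : ℝ)
    (u v : ℕ → H) (hu : ∀ n, ‖u n‖ = 1) (hv : ∀ n, ‖v n‖ = 1)
    (huv : ∀ m n : ℕ, ⟪u m, v n⟫_ℂ = 0)
    (hux : Filter.Tendsto (fun n => ‖T (u n) - (x : ℂ) • u n‖) Filter.atTop (nhds 0))
    (hvy : Filter.Tendsto (fun n => ‖T (v n) - (y : ℂ) • v n‖) Filter.atTop (nhds 0))
    (K : ℕ → Submodule ℂ H) (hK : ∀ n, K n = Submodule.span ℂ {u n, v n})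
    (E : ℕ → H →L[ℂ] H)
    (hE : ∀ n, E n = ((K n)ᗮ).subtypeL.comp (Submodule.orthogonalProjectionOnto ((K n)ᗮ)))
    (ψ : ℕ → H →L[ℂ] H)
    (hψ : ∀ n, ψ n = (x : ℂ) • rankOneOp (u n) (u n) + (y : ℂ) • rankOneOp (v n) (v n)
        + (E n).comp (T.comp (E n))) :
    (∀ n, ‖ψ n - T‖ ≤ 2 * (‖T (u n) - (x : ℂ) • u n‖ + ‖T (v n) - (y : ℂ) • v n‖)) ∧
    Filter.Tendsto ψ Filter.atTop (nhds T) := by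
  have hbound (n : ℕ) :
      ‖ψ n - T‖ ≤ 2 * (‖T (u n) - (x : ℂ) • u n‖ + ‖T (v n) - (y : ℂ) • v n‖) := by
    rw [hψ n, hE n, hK n, rankOneOp_eq_rankOne, rankOneOp_eq_rankOne]
    exact norm_compression_sub_le hT (hu n) (hv n) (huv n n) x y
  refine ⟨hbound, tendsto_iff_norm_sub_tendsto_zero.mpr ?_⟩
  refine squeeze_zero (fun n => norm_nonneg _) hbound ?_
  simpa using (hux.add hvy).const_mul 2
end

section
/- A unital C*-algebra A is commutative if and only if for all self-adjoint a, b ∈ A, a ≤ b implies exp(a) ≤ exp(b). -/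
/-!
Commuting self-adjoint `a ≤ b` give `exp b - exp a = exp a * (exp (b - a) - 1)`, a product of two
commuting positive elements.

Conversely, let `x = F(h)`, `y = G(h)` and `a = θ(h)` be functions of a self-adjoint `h` with
`θ = 0` on the support of `F` and `θ = 1` on the support of `G`, and let `c ≥ 0`. Writing
`φ(X) = ∫₀¹ exp (u X) du` (`avgExp`), so that `exp X = 1 + X φ(X)`, the eigen-relations
`x a = 0`, `y a = y` give exactly `x P = s x c φ(ta + sc)` and `y P = eᵗ s y c φ(ta + sc - t)` for
`P = exp (ta + sc) - exp (ta)`, which is positive by monotonicity. Cauchy–Schwarz for `P`, after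
`s → 0`, yields `φ(t)² ‖x c y‖² ≤ eᵗ ‖x c x‖ ‖y c y‖`, and `φ(t)² e⁻ᵗ → ∞` forces `x c y = 0`.
Hence every `k` satisfies `F(h) k G(h) = 0` whenever `F`, `G` have disjoint supports. For a
partition of unity `uⱼ(h)` of mesh `δ` the pieces `[h, k] uⱼ(h)` then have norm `O(δ ‖k‖)` and
are orthogonal beyond neighbours, so the C⋆-identity gives `‖[h, k]‖² = O(δ)`.
-/

open NormedSpace (exp)

theorem exp_le_exp_of_commute {A : Type*} [CStarAlgebra A] [PartialOrder A] [StarOrderedRing A]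
    {a b : A} (ha : IsSelfAdjoint a) (hab : Commute a b) (h : a ≤ b) : exp a ≤ exp b := by
  let +nondep : NormedAlgebra ℚ A := .restrictScalars ℚ ℂ A
  have hd : 0 ≤ b - a := sub_nonneg.mpr h
  have had : Commute a (b - a) := hab.sub_right (Commute.refl a)
  have hexp : exp b = exp a * exp (b - a) := by
    rw [← NormedSpace.exp_add_of_commute had, add_sub_cancel]
  have h1 : 1 ≤ exp (b - a) := by
    rw [← CFC.real_exp_eq_normedSpace_exp hd.isSelfAdjoint]
    exact one_le_cfc _ _ fun v hv => Real.one_le_exp (spectrum_nonneg_of_nonneg hd hv)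
  rw [← sub_nonneg, hexp, ← mul_sub_one]
  exact Commute.mul_nonneg ha.exp_nonneg (sub_nonneg.mpr h1)
    (had.exp.sub_right (Commute.one_right _))

theorem pow_mul_of_mul_eq_smul {R 𝔸 : Type*} [CommSemiring R] [Semiring 𝔸] [Algebra R 𝔸]
    {X w : 𝔸} {μ : R} (h : X * w = μ • w) (n : ℕ) : X ^ n * w = μ ^ n • w := by
  induction n with
  | zero => simp
  | succ n ih => rw [pow_succ', mul_assoc, ih, mul_smul_comm, h, smul_smul, pow_succ]

section AvgExp

variable {𝔸 : Type*} [NormedRing 𝔸] [NormedAlgebra ℝ 𝔸] [CompleteSpace 𝔸]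

noncomputable def avgExp (X : 𝔸) : 𝔸 := ∫ u in (0 : ℝ)..1, exp (u • X)

@[fun_prop]
theorem continuous_avgExp : Continuous (avgExp : 𝔸 → 𝔸) := by
  let +nondep : NormedAlgebra ℚ 𝔸 := .restrictScalars ℚ ℝ 𝔸
  unfold avgExp
  fun_prop

theorem avgExp_zero : avgExp (0 : 𝔸) = 1 := by simp [avgExp]

theorem intervalIntegrable_exp_smul (X : 𝔸) (a b : ℝ) :
    IntervalIntegrable (fun u : ℝ => exp (u • X)) MeasureTheory.volume a b := by
  let +nondep : NormedAlgebra ℚ 𝔸 := .restrictScalars ℚ ℝ 𝔸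
  exact (by fun_prop : Continuous fun u : ℝ => exp (u • X)).intervalIntegrable _ _

theorem one_add_mul_avgExp (X : 𝔸) : 1 + X * avgExp X = exp X := by
  have hFTC : ∫ u in (0 : ℝ)..1, X * exp (u • X) = exp X - 1 := by
    rw [intervalIntegral.integral_eq_sub_of_hasDerivAt
      (fun u _ => hasDerivAt_exp_smul_const' X u) ((intervalIntegrable_exp_smul X 0 1).const_mul X)]
    simp
  have hmul := (ContinuousLinearMap.mul ℝ 𝔸 X).intervalIntegral_comp_comm
    (intervalIntegrable_exp_smul X 0 1)
  simp only [ContinuousLinearMap.mul_apply'] at hmul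
  rw [avgExp, ← hmul, hFTC, add_sub_cancel]

theorem exp_mul_of_mul_eq_smul {X w : 𝔸} {μ : ℝ} (h : X * w = μ • w) :
    exp X * w = Real.exp μ • w := by
  rw [NormedSpace.exp_eq_tsum ℝ, ← (NormedSpace.expSeries_summable' X).tsum_mul_right,
    Real.exp_eq_exp_ℝ, NormedSpace.exp_eq_tsum ℝ,
    ← (NormedSpace.expSeries_summable' μ).tsum_smul_const]
  simp_rw [smul_mul_assoc, pow_mul_of_mul_eq_smul h, smul_smul, smul_eq_mul]

theorem mul_exp_of_mul_eq_smul {X w : 𝔸} {μ : ℝ} (h : w * X = μ • w) :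
    w * exp X = Real.exp μ • w := by
  have hop := exp_mul_of_mul_eq_smul (X := MulOpposite.op X) (w := MulOpposite.op w) (μ := μ)
    (by rw [← MulOpposite.op_mul, h, MulOpposite.op_smul])
  rw [NormedSpace.exp_op, ← MulOpposite.op_mul, ← MulOpposite.op_smul] at hop
  exact MulOpposite.op_injective hop

theorem avgExp_mul_of_mul_eq_smul {X w : 𝔸} {μ : ℝ} (h : X * w = μ • w) :
    avgExp X * w = avgExp μ • w := by
  have hu (u : ℝ) : exp (u • X) * w = exp (u • μ) • w := by
    rw [exp_mul_of_mul_eq_smul (μ := u • μ) (by rw [smul_mul_assoc, h, smul_smul, smul_eq_mul]),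
      Real.exp_eq_exp_ℝ]
  have hmul := ((ContinuousLinearMap.mul ℝ 𝔸).flip w).intervalIntegral_comp_comm
    (intervalIntegrable_exp_smul X 0 1)
  simp only [ContinuousLinearMap.flip_apply, ContinuousLinearMap.mul_apply'] at hmul
  rw [avgExp, avgExp, ← hmul, ← intervalIntegral.integral_smul_const]
  simp [hu]

theorem mul_exp_add_sub_exp_of_mul_eq_smul {X W w : 𝔸} {μ : ℝ} (h : w * X = μ • w) :
    w * (exp (X + W) - exp X) =
      Real.exp μ • (w * W * avgExp (X + W - algebraMap ℝ 𝔸 μ)) := by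
  let +nondep : NormedAlgebra ℚ 𝔸 := .restrictScalars ℚ ℝ 𝔸
  set Y := X + W - algebraMap ℝ 𝔸 μ
  have hshift : exp (X + W) = Real.exp μ • exp Y := by
    rw [show X + W = algebraMap ℝ 𝔸 μ + Y by simp only [Y]; abel,
      NormedSpace.exp_add_of_commute (Algebra.commutes _ _), ← NormedSpace.algebraMap_exp_comm,
      ← Real.exp_eq_exp_ℝ, Algebra.smul_def]
  have hwY : w * Y = w * W := by
    rw [mul_sub, mul_add, h, Algebra.smul_def, ← Algebra.commutes, add_sub_cancel_left]
  rw [hshift, mul_sub, mul_smul_comm, mul_exp_of_mul_eq_smul h, ← one_add_mul_avgExp Y, mul_add,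
    ← mul_assoc, hwY, mul_one, smul_add, add_sub_cancel_left]

end AvgExp

theorem exp_mul_sq_div_le_avgExp_sq {t : ℝ} (ht : 0 < t) :
    Real.exp t * t ^ 2 / 64 ≤ avgExp t ^ 2 := by
  have hmul : 1 + t * avgExp t = Real.exp t := by
    simpa [← Real.exp_eq_exp_ℝ] using one_add_mul_avgExp t
  have hE := Real.quadratic_le_exp_of_nonneg (half_pos ht).le
  have hsq : Real.exp t = Real.exp (t / 2) ^ 2 := by rw [sq, ← Real.exp_add, add_halves]
  -- `t φ(t) = eᵗ - 1 ≥ e^(t/2) (e^(t/2) - 1) ≥ e^(t/2) t² / 8`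
  have hφ : Real.exp (t / 2) * t ^ 2 / 8 ≤ t * avgExp t := by nlinarith
  have h2 := pow_le_pow_left₀ (by positivity) hφ 2
  refine le_of_mul_le_mul_left ?_ (by positivity : 0 < t ^ 2)
  rw [hsq]
  linarith

theorem nonpos_of_forall_avgExp_sq_mul_le {β M : ℝ}
    (h : ∀ t, avgExp t ^ 2 * β ≤ Real.exp t * M) : β ≤ 0 := by
  by_contra! hβ
  have hbound (t : ℝ) (ht : 0 < t) : t ^ 2 * β ≤ 64 * M := by
    have := (mul_le_mul_of_nonneg_right (exp_mul_sq_div_le_avgExp_sq ht) hβ.le).trans (h t)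
    refine le_of_mul_le_mul_left ?_ (Real.exp_pos t)
    linarith
  set t := max 1 ((64 * M + 1) / β)
  have ht : 1 ≤ t := le_max_left _ _
  have htβ : 64 * M + 1 ≤ t * β := (div_le_iff₀ hβ).mp (le_max_right _ _)
  nlinarith [hbound t (by linarith), mul_nonneg (mul_nonneg (by linarith : (0 : ℝ) ≤ t) hβ.le)
    (sub_nonneg.2 ht)]

section Locality

variable {A : Type*} [CStarAlgebra A]

def IsSpectrallyLocal (h k : A) : Prop :=
  ∀ F G : ℝ → ℝ, Continuous F → Continuous G → Disjoint (tsupport F) (tsupport G) →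
    cfc F h * k * cfc G h = 0

theorem norm_star_mul_mul_sq_le [PartialOrder A] [StarOrderedRing A] {P : A} (hP : 0 ≤ P)
    (x y : A) : ‖star x * P * y‖ ^ 2 ≤ ‖star x * P * x‖ * ‖star y * P * y‖ := by
  obtain ⟨q, rfl⟩ := CStarAlgebra.nonneg_iff_eq_star_mul_self.mp hP
  have hq (u v : A) : star u * (star q * q) * v = star (q * u) * (q * v) := by
    simp only [star_mul, mul_assoc]
  rw [hq, hq, hq, CStarRing.norm_star_mul_self, CStarRing.norm_star_mul_self]
  calc ‖star (q * x) * (q * y)‖ ^ 2 ≤ (‖q * x‖ * ‖q * y‖) ^ 2 := by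
        gcongr
        exact (norm_mul_le _ _).trans_eq (by rw [norm_star])
    _ = _ := by ring

variable [PartialOrder A] [StarOrderedRing A]
  (hexp : MonotoneOn (exp : A → A) {a | IsSelfAdjoint a})
include hexp

theorem norm_mul_avgExp_mul_sq_le {a c x y : A} (ha : IsSelfAdjoint a) (hc : 0 ≤ c)
    (hx : IsSelfAdjoint x) (hy : IsSelfAdjoint y) (hxa : x * a = 0) (hya : y * a = y) (t : ℝ)
    {s : ℝ} (hs : 0 < s) :
    ‖x * c * avgExp (t • a + s • c) * y‖ ^ 2 ≤ Real.exp t *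
      (‖x * c * avgExp (t • a + s • c) * x‖ *
        ‖y * c * avgExp (t • a + s • c - algebraMap ℝ A t) * y‖) := by
  have hxP : x * (exp (t • a + s • c) - exp (t • a)) = s • (x * c * avgExp (t • a + s • c)) := by
    simpa [smul_mul_assoc, mul_smul_comm] using
      mul_exp_add_sub_exp_of_mul_eq_smul (X := t • a) (W := s • c) (μ := 0)
        (by rw [mul_smul_comm, hxa, smul_zero, zero_smul])
  have hyP : y * (exp (t • a + s • c) - exp (t • a)) =
      (Real.exp t * s) • (y * c * avgExp (t • a + s • c - algebraMap ℝ A t)) := by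
    rw [mul_exp_add_sub_exp_of_mul_eq_smul (by rw [mul_smul_comm, hya]), mul_smul_comm,
      smul_mul_assoc, smul_smul]
  have hta : IsSelfAdjoint (t • a) := (IsSelfAdjoint.all t).smul ha
  have hP : 0 ≤ exp (t • a + s • c) - exp (t • a) := sub_nonneg.mpr <|
    hexp hta (hta.add ((IsSelfAdjoint.all s).smul hc.isSelfAdjoint))
      (le_add_of_nonneg_right (smul_nonneg hs.le hc))
  have hCS := norm_star_mul_mul_sq_le hP x y
  rw [hx.star_eq, hy.star_eq, hxP, hyP, smul_mul_assoc, smul_mul_assoc, smul_mul_assoc,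
    norm_smul, norm_smul, norm_smul, Real.norm_of_nonneg hs.le,
    Real.norm_of_nonneg (by positivity)] at hCS
  refine le_of_mul_le_mul_left ?_ (by positivity : 0 < s ^ 2)
  linarith

theorem avgExp_sq_mul_norm_sq_le {a c x y : A} (ha : IsSelfAdjoint a) (hc : 0 ≤ c)
    (hx : IsSelfAdjoint x) (hy : IsSelfAdjoint y) (hxa : x * a = 0) (hay : a * y = y) (t : ℝ) :
    avgExp t ^ 2 * ‖x * c * y‖ ^ 2 ≤ Real.exp t * (‖x * c * x‖ * ‖y * c * y‖) := by
  have hax : a * x = 0 := by simpa [ha.star_eq, hx.star_eq] using congrArg star hxa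
  have hya : y * a = y := by simpa [ha.star_eq, hy.star_eq] using congrArg star hay
  set f : ℝ → ℝ := fun s => ‖x * c * avgExp (t • a + s • c) * y‖ ^ 2
  set g : ℝ → ℝ := fun s => Real.exp t * (‖x * c * avgExp (t • a + s • c) * x‖ *
    ‖y * c * avgExp (t • a + s • c - algebraMap ℝ A t) * y‖)
  have hf : Continuous f := by fun_prop
  have hg : Continuous g := by fun_prop
  have h0 : f 0 ≤ g 0 := closure_minimal (s := Set.Ioi 0)
    (fun s hs => norm_mul_avgExp_mul_sq_le hexp ha hc hx hy hxa hya t hs) (isClosed_le hf hg)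
    (by simp)
  have hay' : (t • a) * y = t • y := by rw [smul_mul_assoc, hay]
  have hax' : (t • a) * x = (0 : ℝ) • x := by rw [smul_mul_assoc, hax, smul_zero, zero_smul]
  have hay'' : (t • a - algebraMap ℝ A t) * y = (0 : ℝ) • y := by
    rw [sub_mul, hay', Algebra.algebraMap_eq_smul_one, smul_mul_assoc, one_mul, sub_self,
      zero_smul]
  simpa only [f, g, zero_smul, add_zero, mul_assoc, avgExp_mul_of_mul_eq_smul hay',
    avgExp_mul_of_mul_eq_smul hax', avgExp_mul_of_mul_eq_smul hay'', avgExp_zero, one_smul,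
    mul_smul_comm, norm_smul, mul_pow, Real.norm_eq_abs, sq_abs] using h0

theorem mul_mul_eq_zero_of_monotoneOn_exp {a x y : A} (ha : IsSelfAdjoint a)
    (hx : IsSelfAdjoint x) (hy : IsSelfAdjoint y) (hxa : x * a = 0) (hay : a * y = y) (c : A) :
    x * c * y = 0 := by
  have hpos (c : A) (hc : 0 ≤ c) : x * c * y = 0 := by
    have := nonpos_of_forall_avgExp_sq_mul_le
      (avgExp_sq_mul_norm_sq_le hexp ha hc hx hy hxa hay)
    exact norm_eq_zero.mp (pow_eq_zero_iff two_ne_zero |>.mp (le_antisymm this (by positivity)))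
  have hc : c ∈ Submodule.span ℂ {a : A | 0 ≤ a} := by
    rw [CStarAlgebra.span_nonneg]; exact Submodule.mem_top
  induction hc using Submodule.span_induction with
  | mem c hc => exact hpos c hc
  | zero => simp
  | add c d _ _ hc hd => rw [mul_add, add_mul, hc, hd, add_zero]
  | smul r c _ hc => rw [mul_smul_comm, smul_mul_assoc, hc, smul_zero]

theorem isSpectrallyLocal_of_monotoneOn_exp (h k : A) : IsSpectrallyLocal h k := by
  intro F G hF hG hFG
  obtain ⟨θ, hθF, hθG, -⟩ :=
    exists_continuous_zero_one_of_isClosed (isClosed_tsupport F) (isClosed_tsupport G) hFG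
  have hFθ (v : ℝ) : F v * θ v = 0 := by
    by_cases hv : F v = 0
    · rw [hv, zero_mul]
    · rw [hθF (subset_tsupport F hv), Pi.zero_apply, mul_zero]
  have hGθ (v : ℝ) : θ v * G v = G v := by
    by_cases hv : G v = 0
    · rw [hv, mul_zero]
    · rw [hθG (subset_tsupport G hv), Pi.one_apply, one_mul]
  refine mul_mul_eq_zero_of_monotoneOn_exp hexp (a := cfc θ h) (cfc_predicate _ _)
    (cfc_predicate _ _) (cfc_predicate _ _) ?_ ?_ k
  · rw [← cfc_mul F θ h, funext hFθ, cfc_const_zero]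
  · rw [← cfc_mul θ G h, funext hGθ]

end Locality

open Finset in
theorem norm_sum_sq_le_of_mul_star_eq_zero {E : Type*} [NormedRing E] [StarRing E] [CStarRing E]
    (R : ℕ → E) (N q : ℕ) {C : ℝ} (hR : ∀ j, ‖R j‖ ≤ C)
    (horth : ∀ i j, i + q < j ∨ j + q < i → R i * star (R j) = 0) :
    ‖∑ j ∈ range N, R j‖ ^ 2 ≤ N * ((2 * q + 1) * C ^ 2) := by
  have hC : 0 ≤ C := (norm_nonneg _).trans (hR 0)
  have hrow (i : ℕ) : ∑ j ∈ range N, ‖R i * star (R j)‖ ≤ (2 * q + 1) * C ^ 2 := by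
    rw [← sum_filter_of_ne (p := fun j => ¬(i + q < j ∨ j + q < i))
      fun j _ hj hfar => hj (by rw [horth i j hfar, norm_zero])]
    have hcard : #((range N).filter fun j => ¬(i + q < j ∨ j + q < i)) ≤ 2 * q + 1 :=
      (card_le_card fun j hj => by simp at hj ⊢; omega).trans (by simp; omega :
        #(Icc (i - q) (i + q)) ≤ 2 * q + 1)
    refine (sum_le_card_nsmul _ _ (C ^ 2) fun j _ => ?_).trans ?_
    · calc ‖R i * star (R j)‖ ≤ ‖R i‖ * ‖R j‖ := (norm_mul_le _ _).trans_eq (by rw [norm_star])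
        _ ≤ C ^ 2 := by rw [sq]; exact mul_le_mul (hR i) (hR j) (norm_nonneg _) hC
    · rw [nsmul_eq_mul]
      gcongr
      exact_mod_cast hcard
  calc ‖∑ j ∈ range N, R j‖ ^ 2 = ‖∑ i ∈ range N, ∑ j ∈ range N, R i * star (R j)‖ := by
        rw [sq, ← CStarRing.norm_self_mul_star, star_sum, sum_mul_sum]
    _ ≤ ∑ i ∈ range N, ∑ j ∈ range N, ‖R i * star (R j)‖ :=
        (norm_sum_le _ _).trans (sum_le_sum fun i _ => norm_sum_le _ _)
    _ ≤ ∑ i ∈ range N, (2 * q + 1) * C ^ 2 := sum_le_sum fun i _ => hrow i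
    _ = N * ((2 * q + 1) * C ^ 2) := by simp

noncomputable def ramp (x : ℝ) : ℝ := max 0 (min 1 x)

noncomputable def tent (j : ℕ) (x : ℝ) : ℝ := ramp (x - j) - ramp (x - (j + 1))

theorem continuous_tent (j : ℕ) : Continuous (tent j) := by
  unfold tent ramp; fun_prop

theorem tent_nonneg (j : ℕ) (x : ℝ) : 0 ≤ tent j x := by
  unfold tent ramp
  have : min 1 (x - (j + 1)) ≤ min 1 (x - j) := min_le_min_left _ (by linarith)
  have := max_le_max_left 0 this
  linarith

theorem tent_le_one (j : ℕ) (x : ℝ) : tent j x ≤ 1 := by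
  unfold tent ramp
  have h1 : max 0 (min 1 (x - j)) ≤ 1 := max_le zero_le_one (min_le_left _ _)
  have h2 : 0 ≤ max 0 (min 1 (x - (j + 1))) := le_max_left _ _
  linarith

theorem tent_eq_zero_of_not_mem {j : ℕ} {x : ℝ} (hx : x ∉ Set.Ioo (j : ℝ) (j + 2)) :
    tent j x = 0 := by
  unfold tent ramp
  rw [Set.mem_Ioo, not_and_or, not_lt, not_lt] at hx
  rcases hx with hx | hx
  · rw [min_eq_right (by linarith), min_eq_right (by linarith), max_eq_left (by linarith),
      max_eq_left (by linarith), sub_zero]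
  · rw [min_eq_left (by linarith), min_eq_left (by linarith), sub_self]

theorem tent_mul_tent_eq_zero {i j : ℕ} (hij : i + 1 < j ∨ j + 1 < i) (x : ℝ) :
    tent i x * tent j x = 0 := by
  by_cases hx : x ∈ Set.Ioo (i : ℝ) (i + 2)
  · rw [tent_eq_zero_of_not_mem (j := j) fun hx' => ?_, mul_zero]
    simp only [Set.mem_Ioo] at hx hx'
    rcases hij with hij | hij
    · have : (i : ℝ) + 2 ≤ j := by exact_mod_cast hij
      linarith
    · have : (j : ℝ) + 2 ≤ i := by exact_mod_cast hij
      linarith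
  · rw [tent_eq_zero_of_not_mem hx, zero_mul]

theorem sum_range_tent {N : ℕ} {x : ℝ} (h1 : 1 ≤ x) (hN : x ≤ N) :
    ∑ j ∈ Finset.range N, tent j x = 1 := by
  have := Finset.sum_range_sub' (fun j : ℕ => ramp (x - j)) N
  simp only [Nat.cast_add, Nat.cast_one] at this
  rw [show (∑ j ∈ Finset.range N, tent j x) = _ from this]
  simp only [ramp, Nat.cast_zero, sub_zero]
  rw [min_eq_left h1, max_eq_right zero_le_one, min_eq_right (by linarith),
    max_eq_left (by linarith), sub_zero]

section Commutator

variable {A : Type*} [CStarAlgebra A]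

theorem norm_commutator_mul_cfc_le {h k : A} (hh : IsSelfAdjoint h) (hloc : IsSpectrallyLocal h k)
    {G : ℝ → ℝ} (hG : Continuous G) (hG1 : ∀ v, |G v| ≤ 1) {c δ : ℝ} (hδ : 0 < δ)
    (hsupp : tsupport G ⊆ Metric.closedBall c δ) :
    ‖(h * k - k * h) * cfc G h‖ ≤ 3 * δ * ‖k‖ := by
  set C := algebraMap ℝ A c
  -- `g` agrees with `v - c` near the support of `G` and is bounded by `2δ`
  set g : ℝ → ℝ := fun v => max (-(2 * δ)) (min (2 * δ) (v - c))
  have hcfc_sub : cfc (fun v => v - c) h = h - C := by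
    rw [cfc_sub (fun v => v) (fun _ => c) h, cfc_id' ℝ h, cfc_const c h]
  have hfar : tsupport (fun v => v - c - g v) ⊆ {v | 2 * δ ≤ dist v c} := by
    refine closure_minimal (fun v hv => ?_)
      (isClosed_le continuous_const (continuous_id.dist continuous_const))
    by_contra hlt
    simp only [Set.mem_ofPred_eq, not_le, Real.dist_eq, abs_lt] at hlt
    exact hv (by
      simp only [g]; rw [min_eq_right (by linarith), max_eq_right (by linarith), sub_self])
  have hzero := hloc (fun v => v - c - g v) G (by fun_prop) hG <|
    Set.disjoint_of_subset hfar hsupp <| Set.disjoint_left.mpr fun v h1 h2 => by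
      simp only [Set.mem_ofPred_eq, Metric.mem_closedBall] at h1 h2; linarith
  rw [cfc_sub (fun v => v - c) g h, hcfc_sub] at hzero
  have hcomm : (h * k - k * h) * cfc G h =
      cfc g h * k * cfc G h - k * cfc (fun v => (v - c) * G v) h := by
    have hloc' : (h - C) * k * cfc G h = cfc g h * k * cfc G h := by
      rw [← sub_eq_zero, ← hzero]; noncomm_ring
    rw [cfc_mul (fun v => v - c) G h, hcfc_sub, ← hloc', sub_mul h C k, Algebra.commutes c k]
    noncomm_ring
  have hg : ‖cfc g h‖ ≤ 2 * δ := norm_cfc_le (by positivity) fun v _ => by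
    rw [Real.norm_eq_abs, abs_le]
    exact ⟨le_max_left _ _, max_le (by linarith) (min_le_left _ _)⟩
  have hGh : ‖cfc G h‖ ≤ 1 := norm_cfc_le zero_le_one fun v _ => hG1 v
  have hcG : ‖cfc (fun v => (v - c) * G v) h‖ ≤ δ := norm_cfc_le hδ.le fun v _ => by
    by_cases hv : G v = 0
    · simp [hv, hδ.le]
    · rw [Real.norm_eq_abs, abs_mul, ← mul_one δ]
      exact mul_le_mul (hsupp (subset_tsupport G hv)) (hG1 v) (abs_nonneg _) hδ.le
  rw [hcomm]
  calc _ ≤ ‖cfc g h‖ * ‖k‖ * ‖cfc G h‖ + ‖k‖ * ‖cfc (fun v => (v - c) * G v) h‖ :=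
        (norm_sub_le _ _).trans (add_le_add (norm_mul₃_le) (norm_mul_le _ _))
    _ ≤ 2 * δ * ‖k‖ * 1 + ‖k‖ * δ := by gcongr
    _ = 3 * δ * ‖k‖ := by ring

theorem norm_commutator_sq_le {h k : A} (hh : IsSelfAdjoint h) (hloc : IsSpectrallyLocal h k)
    {b δ : ℝ} (hδ : 0 < δ) {N : ℕ} (hspec : ∀ v ∈ spectrum ℝ h, b + δ ≤ v ∧ v ≤ b + N * δ) :
    ‖h * k - k * h‖ ^ 2 ≤ N * (3 * (3 * δ * ‖k‖) ^ 2) := by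
  set G : ℕ → ℝ → ℝ := fun j v => tent j ((v - b) / δ)
  have hGc (j : ℕ) : Continuous (G j) := (continuous_tent j).comp (by fun_prop)
  have hsupp (j : ℕ) : tsupport (G j) ⊆ Metric.closedBall (b + (j + 1) * δ) δ := by
    refine closure_minimal (fun v hv => ?_) Metric.isClosed_closedBall
    have hx := not_not.mp (mt tent_eq_zero_of_not_mem hv)
    rw [Set.mem_Ioo, lt_div_iff₀ hδ, div_lt_iff₀ hδ] at hx
    rw [Metric.mem_closedBall, Real.dist_eq, abs_le]
    constructor <;> linarith
  have hone : ∑ j ∈ Finset.range N, cfc (G j) h = 1 := by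
    rw [← cfc_sum .., ← cfc_const_one ℝ h]
    refine cfc_congr fun v hv => ?_
    obtain ⟨h1, h2⟩ := hspec v hv
    simp only [Finset.sum_apply, G]
    exact sum_range_tent ((le_div_iff₀ hδ).mpr (by linarith)) ((div_le_iff₀ hδ).mpr (by linarith))
  have hGG (i j : ℕ) (hij : i + 1 < j ∨ j + 1 < i) : cfc (G i) h * cfc (G j) h = 0 := by
    rw [← cfc_mul (G i) (G j) h, ← cfc_const_zero ℝ h]
    exact cfc_congr fun v _ => tent_mul_tent_eq_zero hij _
  have hR := norm_sum_sq_le_of_mul_star_eq_zero (fun j => (h * k - k * h) * cfc (G j) h) N 1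
    (C := 3 * δ * ‖k‖)
    (fun j => norm_commutator_mul_cfc_le hh hloc (hGc j)
      (fun v => abs_le.mpr ⟨by linarith [tent_nonneg j ((v - b) / δ)], tent_le_one j _⟩) hδ
      (hsupp j))
    (fun i j hij => by
      rw [star_mul, (cfc_predicate (G j) h).star_eq, mul_assoc, ← mul_assoc (cfc (G i) h),
        hGG i j hij, zero_mul, mul_zero])
  rw [← Finset.mul_sum, hone, mul_one] at hR
  norm_num at hR
  exact hR

theorem IsSpectrallyLocal.commute {h k : A} (hloc : IsSpectrallyLocal h k) (hh : IsSelfAdjoint h) :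
    Commute h k := by
  suffices h * k = k * h from this
  nontriviality A
  have hbound (δ : ℝ) (hδ : 0 < δ) : ‖h * k - k * h‖ ^ 2 ≤ 54 * (‖h‖ + δ) * δ * ‖k‖ ^ 2 := by
    set N := ⌈2 * ‖h‖ / δ⌉₊ + 1
    have hN : (N : ℝ) ≤ 2 * ‖h‖ / δ + 2 := by
      have := Nat.ceil_lt_add_one (by positivity : 0 ≤ 2 * ‖h‖ / δ)
      push_cast [N]; linarith
    have hN' : 2 * ‖h‖ / δ + 1 ≤ N := by
      have := Nat.le_ceil (2 * ‖h‖ / δ)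
      push_cast [N]; linarith
    refine (norm_commutator_sq_le hh hloc (b := -‖h‖ - δ) hδ (N := N) fun v hv => ?_).trans ?_
    · have := abs_le.mp (Real.norm_eq_abs v ▸ spectrum.norm_le_norm_of_mem hv)
      have : 2 * ‖h‖ + δ ≤ N * δ := by
        have := mul_le_mul_of_nonneg_right hN' hδ.le
        rwa [add_mul, div_mul_cancel₀ _ hδ.ne', one_mul] at this
      constructor <;> linarith
    · have := mul_le_mul_of_nonneg_right hN (by positivity : 0 ≤ 27 * δ ^ 2 * ‖k‖ ^ 2)
      calc _ = N * (27 * δ ^ 2 * ‖k‖ ^ 2) := by ring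
        _ ≤ (2 * ‖h‖ / δ + 2) * (27 * δ ^ 2 * ‖k‖ ^ 2) := this
        _ = _ := by field_simp; ring
  have hlim : Filter.Tendsto (fun δ => 54 * (‖h‖ + δ) * δ * ‖k‖ ^ 2) (nhdsWithin 0 (Set.Ioi 0))
      (nhds 0) := by
    simpa using ((by fun_prop : Continuous fun δ : ℝ => 54 * (‖h‖ + δ) * δ * ‖k‖ ^ 2).tendsto
      0).mono_left (nhdsWithin_le_nhds (s := Set.Ioi 0))
  have := ge_of_tendsto hlim (eventually_nhdsWithin_of_forall hbound)
  exact sub_eq_zero.mp (norm_eq_zero.mp (pow_eq_zero_iff two_ne_zero |>.mp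
    (le_antisymm this (by positivity))))

end Commutator

/-- (Wu) A unital C*-algebra is commutative if and only if the exponential function is
monotone on the self-adjoint elements. -/
theorem commutative_iff_exp_monotone
    {A : Type*} [CStarAlgebra A] [PartialOrder A] [StarOrderedRing A] :
    (∀ a b : A, a * b = b * a) ↔
      (∀ a b : A, IsSelfAdjoint a → IsSelfAdjoint b → a ≤ b →
        NormedSpace.exp a ≤ NormedSpace.exp b) := by
  refine ⟨fun hcomm a b ha _ hab => exp_le_exp_of_commute ha (hcomm a b) hab, fun hexp => ?_⟩
  have hcomm (h k : A) (hh : IsSelfAdjoint h) : Commute h k :=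
    (isSpectrallyLocal_of_monotoneOn_exp (fun a ha b hb hab => hexp a b ha hb hab) h k).commute hh
  intro a b
  rw [← realPart_add_I_smul_imaginaryPart a]
  exact ((hcomm _ b (realPart a).2).add_left
    ((hcomm _ b (imaginaryPart a).2).smul_left Complex.I)).eq
end
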